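/- arXiv:1201.2999 — 8 statements merged into one kernel-verified Lean document; each statement's English description precedes it below -/
import Mathlib

section
/- For all x in [0, 1/2], the binary entropy function satisfies h2(x) >= 1 - (1-2x)^2. -/
/-- The binary entropy function `h2(x) = -x log2 x - (1-x) log2 (1-x)`. -/
noncomputable def h2 (x : ℝ) : ℝ := -(x * Real.logb 2 x) - (1 - x) * Real.logb 2 (1 - x)

/-!
Expanding both logarithms in power series gives, for `0 < x < 1`,
`H(x) = x (1 - x) ∑ (x ^ n + (1 - x) ^ n) / (n + 1)` (entropy in nats).
By convexity of `t ↦ t ^ n`, `x ^ n + (1 - x) ^ n ≥ 2 (1/2) ^ n`, the value at `x = 1/2`,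
so the series is termwise at least `∑ 2 (1/2) ^ n / (n + 1) = 4 log 2`.
Hence `H(x) ≥ 4 log 2 · x (1 - x) = log 2 · (1 - (1 - 2x) ^ 2)` on all of `[0, 1]`.
-/

open Real

lemma h2_eq_binEntropy_div_log_two (x : ℝ) : h2 x = binEntropy x / log 2 := by
  simp only [h2, binEntropy, logb, log_inv]
  ring

lemma Real.hasSum_negMulLog_one_sub {u : ℝ} (hu : |u| < 1) :
    HasSum (fun n : ℕ => (1 - u) * (u ^ (n + 1) / (n + 1))) (negMulLog (1 - u)) := by
  rw [negMulLog, neg_mul, ← mul_neg]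
  exact (hasSum_pow_div_log_of_abs_lt_one hu).mul_left (1 - u)

lemma Real.hasSum_binEntropy {x : ℝ} (h0 : 0 < x) (h1 : x < 1) :
    HasSum (fun n : ℕ => x * (1 - x) * ((x ^ n + (1 - x) ^ n) / (n + 1))) (binEntropy x) := by
  have hx : |x| < 1 := abs_lt.2 ⟨by linarith, h1⟩
  have hx' : |1 - x| < 1 := abs_lt.2 ⟨by linarith, by linarith⟩
  have hsum := (hasSum_negMulLog_one_sub hx').add (hasSum_negMulLog_one_sub hx)
  rw [sub_sub_cancel, ← binEntropy_eq_negMulLog_add_negMulLog_one_sub] at hsum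
  convert hsum using 2 with n
  ring

lemma Real.hasSum_half_pow_div_succ :
    HasSum (fun n : ℕ => (1 / 2 : ℝ) ^ (n + 1) / (n + 1)) (log 2) := by
  have h := hasSum_pow_div_log_of_abs_lt_one (x := 1 / 2) (by norm_num [abs_of_pos])
  rwa [show (1 : ℝ) - 1 / 2 = 2⁻¹ by norm_num, log_inv, neg_neg] at h

lemma two_mul_half_pow_le_pow_add_one_sub_pow {x : ℝ} (h0 : 0 ≤ x) (h1 : x ≤ 1) (n : ℕ) :
    2 * (1 / 2 : ℝ) ^ n ≤ x ^ n + (1 - x) ^ n := by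
  have h := (convexOn_pow n).2 (Set.mem_Ici.2 h0) (Set.mem_Ici.2 (sub_nonneg.2 h1))
    (by norm_num : (0 : ℝ) ≤ 1 / 2) (by norm_num : (0 : ℝ) ≤ 1 / 2) (by norm_num)
  simp only [smul_eq_mul] at h
  rw [show 1 / 2 * x + 1 / 2 * (1 - x) = (1 / 2 : ℝ) by ring] at h
  linarith

lemma Real.four_mul_log_two_mul_le_binEntropy {x : ℝ} (h0 : 0 ≤ x) (h1 : x ≤ 1) :
    4 * log 2 * (x * (1 - x)) ≤ binEntropy x := by
  rcases h0.eq_or_lt with rfl | h0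
  · simp
  rcases h1.eq_or_lt with rfl | h1
  · simp
  have hterm (n : ℕ) : 4 * (x * (1 - x)) * ((1 / 2 : ℝ) ^ (n + 1) / (n + 1)) ≤
      x * (1 - x) * ((x ^ n + (1 - x) ^ n) / (n + 1)) :=
    calc _ = x * (1 - x) * (2 * (1 / 2 : ℝ) ^ n / (n + 1)) := by ring
      _ ≤ _ := by gcongr; exact two_mul_half_pow_le_pow_add_one_sub_pow h0.le h1.le n
  have h := hasSum_le hterm (hasSum_half_pow_div_succ.mul_left _) (hasSum_binEntropy h0 h1)
  linarith

/-- For all `x ∈ [0, 1/2]`, the binary entropy satisfies `h2(x) ≥ 1 - (1-2x)^2`. -/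
theorem binary_entropy_lower_bound :
    ∀ x ∈ Set.Icc (0:ℝ) (1/2), 1 - (1 - 2*x)^2 ≤ h2 x := by
  rintro x ⟨h0, h1⟩
  rw [h2_eq_binEntropy_div_log_two, le_div_iff₀ (log_pos one_lt_two)]
  have h := four_mul_log_two_mul_le_binEntropy h0 (by linarith)
  linarith
end

section
/- For all x in [0, 1/2], the binary entropy function satisfies h2(x) <= (11/4)*x^(3/4). -/
open Real

namespace Real

lemma binEntropy_le_mul_one_sub_log {p : ℝ} (hp : p ≤ 1) : binEntropy p ≤ p * (1 - log p) := by
  have h := self_sub_one_le_mul_log (sub_nonneg.mpr hp)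
  simp only [binEntropy, log_inv]
  linarith

lemma mul_sub_log_le_exp_sub_one {y : ℝ} (hy : 0 < y) (c : ℝ) : y * (c - log y) ≤ exp (c - 1) := by
  have h := log_le_sub_one_of_pos (div_pos (exp_pos (c - 1)) hy)
  rw [log_div (exp_ne_zero _) hy.ne', log_exp, le_sub_iff_add_le, le_div_iff₀ hy] at h
  linarith

lemma mul_one_sub_log_le_rpow {x s : ℝ} (hx : 0 ≤ x) (hs : 0 < s) :
    x * (1 - log x) ≤ exp (s - 1) / s * x ^ (1 - s) := by
  rcases hx.eq_or_lt with rfl | hx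
  · simp only [zero_mul]
    positivity
  have hsplit : x = x ^ (1 - s) * x ^ s := by
    rw [← rpow_add hx, sub_add_cancel, rpow_one]
  have hfactor : x ^ s * (1 - log x) ≤ exp (s - 1) / s := by
    have h := mul_sub_log_le_exp_sub_one (rpow_pos_of_pos hx s) s
    rw [log_rpow hx] at h
    rw [le_div_iff₀ hs]
    linarith
  calc x * (1 - log x) = x ^ (1 - s) * (x ^ s * (1 - log x)) := by
        nth_rewrite 1 [hsplit]; ring
    _ ≤ x ^ (1 - s) * (exp (s - 1) / s) := by gcongr
    _ = exp (s - 1) / s * x ^ (1 - s) := mul_comm _ _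

lemma four_mul_exp_neg_three_quarters_le : 4 * exp (-(3 / 4)) ≤ 11 / 4 * log 2 := by
  have hexp : (2.1 : ℝ) ≤ exp (3 / 4) := by
    refine le_trans ?_ (sum_le_exp_of_nonneg (by norm_num) 4)
    norm_num [Finset.sum_range_succ, Nat.factorial]
  have hlog := log_two_gt_d9
  rw [exp_neg, ← div_eq_mul_inv, div_le_iff₀ (exp_pos _)]
  nlinarith

end Real

/-- For all `x ∈ [0, 1/2]`, the binary entropy satisfies `h2(x) ≤ (11/4) x^(3/4)`. -/
theorem binary_entropy_upper_bound_rpow :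
    ∀ x ∈ Set.Icc (0:ℝ) (1/2), h2 x ≤ (11/4) * x ^ ((3:ℝ)/4) := by
  rintro x ⟨hx0, hx2⟩
  have hlog2 : 0 < log 2 := log_pos one_lt_two
  calc h2 x = binEntropy x / log 2 := h2_eq_binEntropy_div_log_two x
    _ ≤ x * (1 - log x) / log 2 := by
        gcongr; exact binEntropy_le_mul_one_sub_log (by linarith)
    _ ≤ exp (1 / 4 - 1) / (1 / 4) * x ^ (1 - 1 / 4 : ℝ) / log 2 := by
        gcongr ?_ / _; exact mul_one_sub_log_le_rpow (s := 1 / 4) hx0 (by norm_num)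
    _ = 4 * exp (-(3 / 4)) * x ^ ((3:ℝ)/4) / log 2 := by ring_nf
    _ ≤ 11 / 4 * log 2 * x ^ ((3:ℝ)/4) / log 2 := by
        gcongr ?_ * _ / _; exact four_mul_exp_neg_three_quarters_le
    _ = 11 / 4 * x ^ ((3:ℝ)/4) := by field_simp
end

section
/- For all x in [0, 1/2], h2(x) >= 1 - (2/ln 2)*(x - 1/2)^2 - 8*(x-1/2)^4/(ln(2)*(1 - 4*(x-1/2)^2)) (where for x strictly in (0,1/2] the denominator is positive). -/
open Real

theorem log_one_add_sub_log_one_sub_le {s : ℝ} (hs₀ : 0 ≤ s) (hs₁ : s < 1) :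
    log (1 + s) - log (1 - s) ≤ 2 * s + s ^ 3 / (1 - s ^ 2) := by
  have hs2 : s ^ 2 < 1 := by nlinarith
  have hD : 1 - s ^ 2 ≠ 0 := by linarith
  -- `2 s^(2k+1) / (2k+1) ≤ s (s²)^k`, except at `k = 0` where an extra `s` is needed
  have hterm (k : ℕ) : 2 * (1 / (2 * k + 1)) * s ^ (2 * k + 1)
      ≤ s * (s ^ 2) ^ k + if k = 0 then s else 0 := by
    rw [← pow_mul, mul_comm s, ← pow_succ]
    rcases k with _ | k
    · norm_num
      linarith
    · have hcoeff : (2 : ℝ) * (1 / (2 * (k + 1 : ℕ) + 1)) ≤ 1 := by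
        rw [mul_one_div, div_le_one (by positivity)]
        push_cast
        linarith [k.cast_nonneg (α := ℝ)]
      simpa using mul_le_of_le_one_left (by positivity) hcoeff
  have hbound : HasSum (fun k : ℕ => s * (s ^ 2) ^ k + if k = 0 then s else 0)
      (s * (1 - s ^ 2)⁻¹ + s) :=
    ((hasSum_geometric_of_lt_one (by positivity) hs2).mul_left s).add (hasSum_ite_eq 0 s)
  refine (hasSum_le hterm (hasSum_log_sub_log_of_abs_lt_one
    (by rwa [abs_of_nonneg hs₀])) hbound).trans_eq ?_
  field_simp
  ring

theorem log_one_sub_add_log_one_add_le {s : ℝ} (hs : |s| < 1) :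
    log (1 - s) + log (1 + s) ≤ -s ^ 2 := by
  have h₁ : 0 < 1 - s := by linarith [le_abs_self s]
  have h₂ : 0 < 1 + s := by linarith [neg_abs_le s]
  rw [← log_mul h₁.ne' h₂.ne']
  linarith [log_le_sub_one_of_pos (mul_pos h₁ h₂)]

theorem one_sub_mul_log_one_sub_add_one_add_mul_log_one_add_le {s : ℝ} (hs₀ : 0 ≤ s)
    (hs₁ : s < 1) :
    (1 - s) * log (1 - s) + (1 + s) * log (1 + s) ≤ s ^ 2 / (1 - s ^ 2) := by
  have hsum := log_one_sub_add_log_one_add_le (s := s) (by rwa [abs_of_nonneg hs₀])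
  have hdiff := mul_le_mul_of_nonneg_left (log_one_add_sub_log_one_sub_le hs₀ hs₁) hs₀
  have hD : 1 - s ^ 2 ≠ 0 := by nlinarith
  have hsplit : s ^ 2 / (1 - s ^ 2) = -s ^ 2 + s * (2 * s + s ^ 3 / (1 - s ^ 2)) := by
    field_simp
    ring
  rw [hsplit]
  linarith

theorem h2_one_sub_div_two {s : ℝ} (h₁ : 1 - s ≠ 0) (h₂ : 1 + s ≠ 0) :
    h2 ((1 - s) / 2) = 1 - ((1 - s) * log (1 - s) + (1 + s) * log (1 + s)) / (2 * log 2) := by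
  have hL : log 2 ≠ 0 := by positivity
  rw [h2, show 1 - (1 - s) / 2 = (1 + s) / 2 by ring, logb, logb,
    log_div h₁ two_ne_zero, log_div h₂ two_ne_zero]
  field_simp
  ring

/-- For `x ∈ (0, 1/2]` (so that the denominator `1 - 4(x-1/2)^2` is positive),
`h2(x) ≥ 1 - (2/ln 2)(x-1/2)^2 - 8(x-1/2)^4/(ln 2 · (1 - 4(x-1/2)^2))`. -/
theorem binary_entropy_taylor_lower_bound :
    ∀ x ∈ Set.Ioc (0:ℝ) (1/2),
      1 - (2 / Real.log 2) * (x - 1/2)^2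
        - 8 * (x - 1/2)^4 / (Real.log 2 * (1 - 4 * (x - 1/2)^2)) ≤ h2 x := by
  rintro x ⟨hx₀, hx₁⟩
  obtain ⟨s, rfl⟩ : ∃ s : ℝ, x = (1 - s) / 2 := ⟨1 - 2 * x, by ring⟩
  have hs₀ : 0 ≤ s := by linarith
  have hs₁ : s < 1 := by linarith
  have hL : 0 < log 2 := log_pos one_lt_two
  have hD : 0 < 1 - s ^ 2 := by nlinarith
  have hlhs : 1 - 2 / log 2 * (s ^ 2 / 4) - 8 * (s ^ 4 / 16) / (log 2 * (1 - s ^ 2))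
      = 1 - s ^ 2 / (1 - s ^ 2) / (2 * log 2) := by
    field_simp
    ring
  rw [show (1 - s) / 2 - 1 / 2 = -s / 2 by ring, show (-s / 2) ^ 2 = s ^ 2 / 4 by ring,
    show (-s / 2) ^ 4 = s ^ 4 / 16 by ring, show 1 - 4 * (s ^ 2 / 4) = 1 - s ^ 2 by ring, hlhs,
    h2_one_sub_div_two (s := s) (by linarith) (by linarith)]
  gcongr
  exact one_sub_mul_log_one_sub_add_one_add_mul_log_one_add_le hs₀ hs₁
end

section
/- Let mu, nu be probability measures on [0,1] with CDFs F, G. Suppose for all z in [0,1], integral from z to 1 of F(x) dx <= integral from z to 1 of G(x) dx (i.e., mu is degraded with respect to nu in the |D|-domain). Define D(mu,nu) = integral from 0 to 1 of x*(G(x)-F(x)) dx. Then D(mu,nu) >= d(mu,nu)^2 / 4, where d is the Wasserstein-1 distance (the L1 distance of CDFs). -/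
open MeasureTheory

/-- Cumulative distribution function of a measure on `ℝ`. -/
noncomputable def cdf (μ : Measure ℝ) (x : ℝ) : ℝ := (μ (Set.Iic x)).toReal

/-- The Wasserstein-1 distance between measures on `[0,1]`,
expressed as the `L¹` distance of their CDFs. -/
noncomputable def W1 (μ ν : Measure ℝ) : ℝ := ∫ x in (0:ℝ)..1, |cdf μ x - cdf ν x|

open Set
open scoped ENNReal

/-!
Let `f`, `g` be the quantile functions of `μ`, `ν` on `(0, 1]`. Integrating over the region
`{(v, x) | F x < v} = {(v, x) | x < f v}` in both orders turns statements about CDFs into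
statements about quantiles: `∫ |f - g| = ∫ |F - G| = d`, `∫ f² = ∫ 2x (1 - F)` (so that
`2 D = ∫ f² - ∫ g²`) and `∫ (f - z)⁺ = ∫_z^1 (1 - F)`. By the last identity, degradation says
`∫_w^1 g ≤ ∫_w^1 f` for all `w`, and since `g` is nondecreasing this gives `∫ g (f - g) ≥ 0`.
Hence `2 D = ∫ (f - g)² + 2 ∫ g (f - g) ≥ ∫ (f - g)² ≥ d²` by Cauchy–Schwarz, i.e. even
`D ≥ d² / 2`.
-/

lemma integrableOn_Ioc_of_abs_le {φ : ℝ → ℝ} {a b C : ℝ}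
    (hφ : AEStronglyMeasurable φ (volume.restrict (Ioc a b))) (hC : ∀ x ∈ Ioc a b, |φ x| ≤ C) :
    IntegrableOn φ (Ioc a b) :=
  Integrable.of_bound hφ C (ae_restrict_of_forall_mem measurableSet_Ioc hC)

lemma sq_integral_abs_sub_le {Ω : Type*} [MeasurableSpace Ω] {μ : Measure Ω}
    [IsProbabilityMeasure μ] {f g : Ω → ℝ} (hf : MemLp f 2 μ) (hg : MemLp g 2 μ)
    (hfg : 0 ≤ ∫ ω, g ω * (f ω - g ω) ∂μ) :
    (∫ ω, |f ω - g ω| ∂μ) ^ 2 ≤ (∫ ω, f ω ^ 2 ∂μ) - ∫ ω, g ω ^ 2 ∂μ := by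
  have hd : MemLp (fun ω ↦ |f ω - g ω|) 2 μ := (hf.sub hg).norm
  have hcs : (∫ ω, |f ω - g ω| ∂μ) ^ 2 ≤ ∫ ω, (f ω - g ω) ^ 2 ∂μ := by
    have := ProbabilityTheory.variance_nonneg (fun ω ↦ |f ω - g ω|) μ
    rw [ProbabilityTheory.variance_eq_sub hd] at this
    simpa [sq_abs] using this
  have hsplit : (∫ ω, f ω ^ 2 ∂μ) - ∫ ω, g ω ^ 2 ∂μ
      = (∫ ω, (f ω - g ω) ^ 2 ∂μ) + 2 * ∫ ω, g ω * (f ω - g ω) ∂μ := by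
    have hsq : Integrable (fun ω ↦ (f ω - g ω) ^ 2) μ := (hf.sub hg).integrable_sq
    have hcross : Integrable (fun ω ↦ 2 * (g ω * (f ω - g ω))) μ :=
      (hg.integrable_mul (hf.sub hg)).const_mul 2
    rw [← integral_sub hf.integrable_sq hg.integrable_sq, ← integral_const_mul,
      ← integral_add hsq hcross]
    congr 1 with ω
    ring
  linarith

lemma setIntegral_Ioc_le_of_integral_posPart_le {f g : ℝ → ℝ} (hf : MonotoneOn f (Ioc 0 1))
    (hf01 : ∀ v ∈ Ioc 0 1, f v ∈ Icc 0 1) (hfi : IntegrableOn f (Ioc 0 1))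
    (hgi : IntegrableOn g (Ioc 0 1))
    (hfg : ∀ c ∈ Icc (0:ℝ) 1, ∫ v in Ioc 0 1, max (g v - c) 0 ≤ ∫ v in Ioc 0 1, max (f v - c) 0)
    {w : ℝ} (hw : w ∈ Icc 0 1) : ∫ v in Ioc w 1, g v ≤ ∫ v in Ioc w 1, f v := by
  -- such a level `c` makes `(f - c)⁺` equal to `f - c` on `(w, 1]` and to `0` on `(0, w]`
  obtain ⟨c, hc, hfc, hcf⟩ : ∃ c ∈ Icc (0:ℝ) 1,
      (∀ v ∈ Ioc 0 w, f v ≤ c) ∧ ∀ v ∈ Ioc w 1, c ≤ f v := by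
    rcases hw.1.eq_or_lt with rfl | hw0
    · exact ⟨0, left_mem_Icc.2 zero_le_one, fun v hv ↦ absurd hv.2 hv.1.not_ge,
        fun v hv ↦ (hf01 v hv).1⟩
    · exact ⟨f w, hf01 w ⟨hw0, hw.2⟩, fun v hv ↦ hf ⟨hv.1, hv.2.trans hw.2⟩ ⟨hw0, hw.2⟩ hv.2,
        fun v hv ↦ hf ⟨hw0, hw.2⟩ ⟨hw0.trans hv.1, hv.2⟩ hv.1.le⟩
  have hsub : Ioc w 1 ⊆ Ioc 0 1 := Ioc_subset_Ioc_left hw.1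
  have hf_tail : ∫ v in Ioc 0 1, max (f v - c) 0 = ∫ v in Ioc w 1, (f v - c) := by
    rw [← inter_eq_right.2 hsub, ← setIntegral_indicator measurableSet_Ioc]
    refine setIntegral_congr_fun measurableSet_Ioc fun v hv ↦ ?_
    by_cases hvw : v ≤ w
    · simp [hvw, hfc v ⟨hv.1, hvw⟩]
    · simp [not_le.1 hvw, hv.2, hcf v ⟨not_le.1 hvw, hv.2⟩]
  have hgc : IntegrableOn (fun v ↦ g v - c) (Ioc 0 1) := hgi.sub (integrableOn_const (by simp))
  have hgc_pos : IntegrableOn (fun v ↦ max (g v - c) 0) (Ioc 0 1) := hgc.pos_part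
  have hg_tail : ∫ v in Ioc w 1, (g v - c) ≤ ∫ v in Ioc 0 1, max (g v - c) 0 :=
    calc ∫ v in Ioc w 1, (g v - c) ≤ ∫ v in Ioc w 1, max (g v - c) 0 :=
          setIntegral_mono_on (hgc.mono_set hsub) (hgc_pos.mono_set hsub) measurableSet_Ioc
            fun v _ ↦ le_max_left _ _
      _ ≤ ∫ v in Ioc 0 1, max (g v - c) 0 :=
          setIntegral_mono_set hgc_pos (ae_of_all _ fun v ↦ le_max_right _ _)
            hsub.eventuallyLE
  have := hg_tail.trans ((hfg c hc).trans hf_tail.le)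
  rwa [integral_sub (hgi.mono_set hsub) (integrableOn_const (by simp)),
    integral_sub (hfi.mono_set hsub) (integrableOn_const (by simp)), sub_le_sub_iff_right] at this

lemma cdf_eq_zero_of_neg {μ : Measure ℝ} (hμ : μ (Icc 0 1)ᶜ = 0) {x : ℝ} (hx : x < 0) :
    cdf μ x = 0 := by
  have : μ (Iic x) = 0 :=
    measure_mono_null (fun y hy ↦ fun h ↦ (lt_of_le_of_lt (mem_Iic.1 hy) hx).not_ge h.1) hμ
  simp [cdf, this]

section ProbabilityMeasure

variable {μ : Measure ℝ} [IsProbabilityMeasure μ]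

lemma cdf_eq_probabilityTheory_cdf : cdf μ = ProbabilityTheory.cdf μ := by
  ext x
  rw [ProbabilityTheory.cdf_eq_real, measureReal_def, cdf]

lemma cdf_mem_Icc (x : ℝ) : cdf μ x ∈ Icc 0 1 := by
  rw [cdf_eq_probabilityTheory_cdf]
  exact ⟨ProbabilityTheory.cdf_nonneg μ x, ProbabilityTheory.cdf_le_one μ x⟩

lemma monotone_cdf : Monotone (cdf μ) := by
  rw [cdf_eq_probabilityTheory_cdf]
  exact ProbabilityTheory.monotone_cdf μ

lemma continuousWithinAt_cdf_Ioi (x : ℝ) : ContinuousWithinAt (cdf μ) (Ioi x) x := by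
  rw [cdf_eq_probabilityTheory_cdf]
  exact ((ProbabilityTheory.cdf μ).right_continuous x).mono Ioi_subset_Ici_self

lemma cdf_eq_one_of_one_le (hμ : μ (Icc 0 1)ᶜ = 0) {x : ℝ} (hx : 1 ≤ x) : cdf μ x = 1 := by
  have : μ (Iic x) = 1 := prob_le_one.antisymm <| by
    rw [← (prob_compl_eq_zero_iff measurableSet_Icc).1 hμ]
    exact measure_mono fun y hy ↦ hy.2.trans hx
  simp [cdf, this]

end ProbabilityMeasure

/-- The generalized inverse of `cdf μ`; only its values on `(0, 1]` are meaningful. -/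
noncomputable def quantile (μ : Measure ℝ) (v : ℝ) : ℝ := sInf {x | v ≤ cdf μ x}

lemma quantile_le_iff {μ : Measure ℝ} [IsProbabilityMeasure μ] (hμ : μ (Icc 0 1)ᶜ = 0)
    {v : ℝ} (hv : v ∈ Ioc 0 1) (x : ℝ) : quantile μ v ≤ x ↔ v ≤ cdf μ x := by
  set S := {x | v ≤ cdf μ x}
  have hne : S.Nonempty := ⟨1, by simpa [S, cdf_eq_one_of_one_le hμ le_rfl] using hv.2⟩
  have hbdd : BddBelow S := ⟨0, fun y hy ↦ not_lt.1 fun hy0 ↦ by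
    have : v ≤ 0 := cdf_eq_zero_of_neg hμ hy0 ▸ hy
    exact this.not_gt hv.1⟩
  -- right continuity of the CDF puts the infimum of `S` into `S`
  have hmem : sInf S ∈ S := ge_of_tendsto (continuousWithinAt_cdf_Ioi _) <|
    eventually_nhdsWithin_of_forall fun y hy ↦
      let ⟨s, hs, hsy⟩ := exists_lt_of_csInf_lt hne hy
      le_trans hs (monotone_cdf hsy.le)
  exact ⟨fun h ↦ le_trans hmem (monotone_cdf h), fun h ↦ csInf_le hbdd h⟩

/-- `q` is a generalized inverse on `(0, 1]` of the `[0, 1]`-valued function `H`. -/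
structure IsUnitQuantile (H q : ℝ → ℝ) : Prop where
  measurable_cdf : Measurable H
  cdf_mem_Icc : ∀ x, H x ∈ Icc 0 1
  quantile_mem_Icc : ∀ v ∈ Ioc 0 1, q v ∈ Icc 0 1
  cdf_lt_iff : ∀ v ∈ Ioc 0 1, ∀ x, H x < v ↔ x < q v

lemma isUnitQuantile_cdf {μ : Measure ℝ} [IsProbabilityMeasure μ] (hμ : μ (Icc 0 1)ᶜ = 0) :
    IsUnitQuantile (cdf μ) (quantile μ) where
  measurable_cdf := monotone_cdf.measurable
  cdf_mem_Icc := cdf_mem_Icc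
  quantile_mem_Icc v hv := by
    refine ⟨not_lt.1 fun hneg ↦ ?_, (quantile_le_iff hμ hv 1).2 ?_⟩
    · have := (quantile_le_iff hμ hv _).1 le_rfl
      rw [cdf_eq_zero_of_neg hμ hneg] at this
      exact this.not_gt hv.1
    · rw [cdf_eq_one_of_one_le hμ le_rfl]; exact hv.2
  cdf_lt_iff v hv x := by rw [← not_le, ← not_le, quantile_le_iff hμ hv]

namespace IsUnitQuantile

variable {H q H' q' : ℝ → ℝ}

lemma sup_inf (h : IsUnitQuantile H q) (h' : IsUnitQuantile H' q') :
    IsUnitQuantile (H ⊔ H') (q ⊓ q') where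
  measurable_cdf := h.measurable_cdf.max h'.measurable_cdf
  cdf_mem_Icc x :=
    ⟨le_max_of_le_left (h.cdf_mem_Icc x).1, max_le (h.cdf_mem_Icc x).2 (h'.cdf_mem_Icc x).2⟩
  quantile_mem_Icc v hv :=
    ⟨le_min (h.quantile_mem_Icc v hv).1 (h'.quantile_mem_Icc v hv).1,
      min_le_of_left_le (h.quantile_mem_Icc v hv).2⟩
  cdf_lt_iff v hv x := by
    rw [Pi.sup_apply, Pi.inf_apply, max_lt_iff, lt_min_iff, h.cdf_lt_iff v hv, h'.cdf_lt_iff v hv]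

lemma monotoneOn (h : IsUnitQuantile H q) : MonotoneOn q (Ioc 0 1) := by
  intro v hv w hw hvw
  by_contra! hlt
  exact lt_irrefl _ <| (h.cdf_lt_iff w hw _).1 <| ((h.cdf_lt_iff v hv _).2 hlt).trans_le hvw

lemma memLp (h : IsUnitQuantile H q) (p : ℝ≥0∞) : MemLp q p (volume.restrict (Ioc 0 1)) :=
  .of_bound
    (aemeasurable_restrict_of_monotoneOn measurableSet_Ioc h.monotoneOn).aestronglyMeasurable 1 <|
    ae_restrict_of_forall_mem measurableSet_Ioc fun v hv ↦ by
      rw [Real.norm_eq_abs, abs_le]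
      exact ⟨by linarith [(h.quantile_mem_Icc v hv).1], (h.quantile_mem_Icc v hv).2⟩

lemma integrableOn_quantile (h : IsUnitQuantile H q) : IntegrableOn q (Ioc 0 1) :=
  memLp_one_iff_integrable.1 (h.memLp 1)

lemma integrableOn_cdf (h : IsUnitQuantile H q) (a b : ℝ) : IntegrableOn H (Ioc a b) :=
  integrableOn_Ioc_of_abs_le h.measurable_cdf.aestronglyMeasurable fun x _ ↦
    abs_le.2 ⟨by linarith [(h.cdf_mem_Icc x).1], (h.cdf_mem_Icc x).2⟩

lemma integral_swap (h : IsUnitQuantile H q) {φ ψ : ℝ → ℝ} {a : ℝ}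
    (hφ : IntegrableOn φ (Ioc 0 1)) (hψ : IntegrableOn ψ (Ioc a 1)) :
    ∫ v in Ioc 0 1, ∫ x in Ioo a (q v), φ v * ψ x
      = ∫ x in Ioc a 1, ∫ v in Ioc (H x) 1, φ v * ψ x := by
  -- both sides integrate `φ v * ψ x` over the region `{H x < v}` of `(0, 1] × (a, 1]`
  set R := {p : ℝ × ℝ | H p.2 < p.1}
  set k := R.indicator fun p ↦ φ p.1 * ψ p.2
  have hk : Integrable k ((volume.restrict (Ioc 0 1)).prod (volume.restrict (Ioc a 1))) :=
    (hφ.mul_prod hψ).indicator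
      (measurableSet_lt (h.measurable_cdf.comp measurable_snd) measurable_fst)
  calc ∫ v in Ioc 0 1, ∫ x in Ioo a (q v), φ v * ψ x
      = ∫ v in Ioc 0 1, ∫ x in Ioc a 1, k (v, x) := by
        refine setIntegral_congr_fun measurableSet_Ioc fun v hv ↦ ?_
        have hq1 := (h.quantile_mem_Icc v hv).2
        have hslice : (fun x ↦ k (v, x)) = (Iio (q v)).indicator fun x ↦ φ v * ψ x := by
          ext x; simp [k, R, indicator, h.cdf_lt_iff v hv]
        have hinter : Ioc a 1 ∩ Iio (q v) = Ioo a (q v) := by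
          ext x
          simp only [mem_inter_iff, mem_Ioc, mem_Iio, mem_Ioo]
          exact ⟨fun hx ↦ ⟨hx.1.1, hx.2⟩, fun hx ↦ ⟨⟨hx.1, hx.2.le.trans hq1⟩, hx.2⟩⟩
        rw [hslice, setIntegral_indicator measurableSet_Iio, hinter]
    _ = ∫ x in Ioc a 1, ∫ v in Ioc 0 1, k (v, x) := integral_integral_swap hk
    _ = ∫ x in Ioc a 1, ∫ v in Ioc (H x) 1, φ v * ψ x := by
        refine setIntegral_congr_fun measurableSet_Ioc fun x _ ↦ ?_
        have hslice : (fun v ↦ k (v, x)) = (Ioi (H x)).indicator fun v ↦ φ v * ψ x := by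
          ext v; simp [k, R, indicator]
        rw [hslice, setIntegral_indicator measurableSet_Ioi, Ioc_inter_Ioi,
          max_eq_right (h.cdf_mem_Icc x).1]

lemma integral_posPart_sub (h : IsUnitQuantile H q) (z : ℝ) :
    ∫ v in Ioc 0 1, max (q v - z) 0 = ∫ x in Ioc z 1, (1 - H x) := by
  have := h.integral_swap (φ := 1) (ψ := 1) (a := z) (integrableOn_const (by simp))
    (integrableOn_const (by simp))
  simpa [Real.volume_real_Ioo, Real.volume_real_Ioc_of_le (h.cdf_mem_Icc _).2] using this

lemma integral_quantile (h : IsUnitQuantile H q) :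
    ∫ v in Ioc 0 1, q v = ∫ x in Ioc 0 1, (1 - H x) := by
  rw [← h.integral_posPart_sub 0]
  refine setIntegral_congr_fun measurableSet_Ioc fun v hv ↦ ?_
  simp [(h.quantile_mem_Icc v hv).1]

lemma integral_quantile_sq (h : IsUnitQuantile H q) :
    ∫ v in Ioc 0 1, q v ^ 2 = ∫ x in Ioc 0 1, 2 * x * (1 - H x) := by
  have hswap := h.integral_swap (φ := 1) (ψ := fun x ↦ 2 * x) (a := 0)
    (integrableOn_const (by simp)) (continuous_const.mul continuous_id).integrableOn_Ioc
  convert hswap using 1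
  · refine setIntegral_congr_fun measurableSet_Ioc fun v hv ↦ ?_
    rw [← integral_Ioc_eq_integral_Ioo,
      ← intervalIntegral.integral_of_le (h.quantile_mem_Icc v hv).1]
    simp only [Pi.one_apply, one_mul]
    rw [intervalIntegral.integral_const_mul, integral_id]
    ring
  · refine setIntegral_congr_fun measurableSet_Ioc fun x _ ↦ ?_
    simp [Real.volume_real_Ioc_of_le (h.cdf_mem_Icc _).2, mul_comm]

lemma integral_quantile_mul_nonneg (h : IsUnitQuantile H q) {φ : ℝ → ℝ}
    (hφ : IntegrableOn φ (Ioc 0 1)) (htail : ∀ w ∈ Icc 0 1, 0 ≤ ∫ v in Ioc w 1, φ v) :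
    0 ≤ ∫ v in Ioc 0 1, q v * φ v := by
  have hswap := h.integral_swap (ψ := 1) (a := 0) hφ (integrableOn_const (by simp))
  have hlen : ∀ v ∈ Ioc (0:ℝ) 1, ∫ x in Ioo 0 (q v), φ v * (1 : ℝ → ℝ) x = q v * φ v :=
    fun v hv ↦ by simp [Real.volume_real_Ioo_of_le (h.quantile_mem_Icc v hv).1]
  rw [← setIntegral_congr_fun measurableSet_Ioc hlen, hswap]
  exact setIntegral_nonneg measurableSet_Ioc fun x _ ↦ by simpa using htail _ (h.cdf_mem_Icc x)

lemma integral_abs_sub (h : IsUnitQuantile H q) (h' : IsUnitQuantile H' q') :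
    ∫ v in Ioc 0 1, |q v - q' v| = ∫ x in Ioc 0 1, |H x - H' x| := by
  -- `|a - b| = a + b - 2 (a ⊓ b)`, and `q ⊓ q'` is the quantile function of `H ⊔ H'`
  have h'' := h.sup_inf h'
  have hq := h.integrableOn_quantile
  have hq' := h'.integrableOn_quantile
  have hq'' := h''.integrableOn_quantile
  have hH : ∀ {G q₀ : ℝ → ℝ}, IsUnitQuantile G q₀ → IntegrableOn (fun x ↦ 1 - G x) (Ioc 0 1) :=
    fun hG ↦ (integrable_const 1).sub (hG.integrableOn_cdf 0 1)
  calc ∫ v in Ioc 0 1, |q v - q' v|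
      = ∫ v in Ioc 0 1, (q v + q' v - 2 * (q ⊓ q') v) :=
        setIntegral_congr_fun measurableSet_Ioc fun v _ ↦ by
          rw [Pi.inf_apply, ← max_sub_min_eq_abs']
          linarith [min_add_max (q v) (q' v)]
    _ = (∫ v in Ioc 0 1, q v) + (∫ v in Ioc 0 1, q' v) - 2 * ∫ v in Ioc 0 1, (q ⊓ q') v := by
        have hsum : IntegrableOn (fun v ↦ q v + q' v) (Ioc 0 1) := hq.add hq'
        rw [integral_sub hsum (hq''.const_mul 2), integral_add hq hq', integral_const_mul]
    _ = (∫ x in Ioc 0 1, (1 - H x)) + (∫ x in Ioc 0 1, (1 - H' x))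
          - 2 * ∫ x in Ioc 0 1, (1 - (H ⊔ H') x) := by
        rw [h.integral_quantile, h'.integral_quantile, h''.integral_quantile]
    _ = ∫ x in Ioc 0 1, ((1 - H x) + (1 - H' x) - 2 * (1 - (H ⊔ H') x)) := by
        have hsum : IntegrableOn (fun x ↦ (1 - H x) + (1 - H' x)) (Ioc 0 1) := (hH h).add (hH h')
        rw [integral_sub hsum ((hH h'').const_mul 2), integral_add (hH h) (hH h'),
          integral_const_mul]
    _ = ∫ x in Ioc 0 1, |H x - H' x| :=
        setIntegral_congr_fun measurableSet_Ioc fun x _ ↦ by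
          rw [Pi.sup_apply, ← max_sub_min_eq_abs']
          linarith [min_add_max (H x) (H' x)]

lemma integral_quantile_mul_sub_nonneg (h : IsUnitQuantile H q) (h' : IsUnitQuantile H' q')
    (hHH' : ∀ z ∈ Icc (0:ℝ) 1, ∫ x in Ioc z 1, H x ≤ ∫ x in Ioc z 1, H' x) :
    0 ≤ ∫ v in Ioc 0 1, q' v * (q v - q' v) := by
  have hq := h.integrableOn_quantile
  have hq' := h'.integrableOn_quantile
  refine h'.integral_quantile_mul_nonneg (hq.sub hq') fun w hw ↦ ?_
  have hsub : Ioc w 1 ⊆ Ioc 0 1 := Ioc_subset_Ioc_left hw.1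
  have htail := setIntegral_Ioc_le_of_integral_posPart_le h.monotoneOn h.quantile_mem_Icc hq hq'
    (fun c hc ↦ by
      rw [h.integral_posPart_sub, h'.integral_posPart_sub,
        integral_sub (integrable_const 1) (h.integrableOn_cdf c 1),
        integral_sub (integrable_const 1) (h'.integrableOn_cdf c 1)]
      linarith [hHH' c hc]) hw
  rw [integral_sub (hq.mono_set hsub) (hq'.mono_set hsub)]
  linarith

lemma integral_quantile_sq_sub (h : IsUnitQuantile H q) (h' : IsUnitQuantile H' q') :
    (∫ v in Ioc 0 1, q v ^ 2) - ∫ v in Ioc 0 1, q' v ^ 2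
      = 2 * ∫ x in Ioc 0 1, x * (H' x - H x) := by
  have hint : ∀ {G q₀ : ℝ → ℝ}, IsUnitQuantile G q₀ →
      IntegrableOn (fun x ↦ 2 * x * (1 - G x)) (Ioc 0 1) := fun hG ↦
    integrableOn_Ioc_of_abs_le (C := 2) ((measurable_id.const_mul 2).mul
      (measurable_const.sub hG.measurable_cdf)).aestronglyMeasurable fun x hx ↦ by
        have := hG.cdf_mem_Icc x
        rw [abs_le]
        constructor <;> nlinarith [hx.1, hx.2, this.1, this.2]
  rw [h.integral_quantile_sq, h'.integral_quantile_sq, ← integral_sub (hint h) (hint h'),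
    ← integral_const_mul]
  congr 1 with x
  ring

end IsUnitQuantile

/-- If `μ` is degraded with respect to `ν` (in the `|D|`-domain sense on CDFs), then
the degradation measure `D(μ,ν) = ∫₀¹ x (G(x) - F(x)) dx` satisfies
`D(μ,ν) ≥ d(μ,ν)²/4` for the Wasserstein-1 distance `d`. -/
theorem degradation_bounds_wasserstein (μ ν : Measure ℝ)
    [IsProbabilityMeasure μ] [IsProbabilityMeasure ν]
    (hμ : μ (Set.Icc (0:ℝ) 1)ᶜ = 0) (hν : ν (Set.Icc (0:ℝ) 1)ᶜ = 0)
    (hdeg : ∀ z ∈ Set.Icc (0:ℝ) 1,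
      (∫ x in z..(1:ℝ), cdf μ x) ≤ ∫ x in z..(1:ℝ), cdf ν x) :
    (W1 μ ν)^2 / 4 ≤ ∫ x in (0:ℝ)..1, x * (cdf ν x - cdf μ x) := by
  have hF := isUnitQuantile_cdf hμ
  have hG := isUnitQuantile_cdf hν
  have : IsProbabilityMeasure (volume.restrict (Ioc (0:ℝ) 1)) := ⟨by simp⟩
  have hcross := hF.integral_quantile_mul_sub_nonneg hG fun z hz ↦ by
    simpa only [intervalIntegral.integral_of_le hz.2] using hdeg z hz
  have hW : W1 μ ν = ∫ v in Ioc 0 1, |quantile μ v - quantile ν v| := by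
    rw [W1, intervalIntegral.integral_of_le zero_le_one, hF.integral_abs_sub hG]
  have hD : 2 * ∫ x in (0:ℝ)..1, x * (cdf ν x - cdf μ x)
      = (∫ v in Ioc 0 1, quantile μ v ^ 2) - ∫ v in Ioc 0 1, quantile ν v ^ 2 := by
    rw [intervalIntegral.integral_of_le zero_le_one, hF.integral_quantile_sq_sub hG]
  have := sq_integral_abs_sub_le (hF.memLp 2) (hG.memLp 2) hcross
  rw [← hW, ← hD] at this
  linarith [sq_nonneg (W1 μ ν)]
end

section
/- Let f be a function of bounded total variation on [0,1] (including boundary jumps |f(0-)| and |f(1+)| in the variation), and set F(x) = integral from 0 to x of f(z) dz. If F(x) >= 0 for all x in [0,1], then (integral from 0 to 1 of F(x) dx) * (total variation of f) >= (1/2) * (integral from 0 to 1 of |f(x)| dx)^2. -/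
/-!
Fix `δ > 0`. Since `f` has bounded variation it has right limits, so `[0,1]` splits into
consecutive maximal pieces on each of which `f` is `δ`-almost of one sign; each new piece shortens
the longest `δ`-alternating chain still ahead, and such chains have at most `V / 2δ + 1` points,
so there are finitely many pieces. On a piece `[u,v]` where `f ≥ -δ`,
`F v ≥ a := ∫ |f| - 2δ(v - u)` and `F` drops at slope at most `M ≥ sup |f|`, so
`∫ F ≥ a² / 2M ≥ c a - c² M / 2`; the case `f ≤ δ` is the mirror image. Taking for `M` twice the
value of `|f|` at a peak of the piece, consecutive peaks are separated by a point where `f` has the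
opposite sign, so these `M` add up to at most `V`. Summing over the pieces gives
`c ∫ |f| - 2cδ - c² V / 2 ≤ ∫ F` for all `c ≥ 0`; let `δ → 0` and take `c = ∫ |f| / V`.
-/

open MeasureTheory Set Filter Topology

lemma mul_sub_sq_mul_le_sq_div {a c M : ℝ} (hM : 0 < M) :
    c * a - c ^ 2 / 2 * M ≤ a ^ 2 / (2 * M) := by
  rw [le_div_iff₀ (by positivity)]
  nlinarith [sq_nonneg (a - c * M)]

lemma one_half_mul_sq_le_mul_of_forall {A D V : ℝ} (hA : 0 ≤ A) (hV : 0 ≤ V)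
    (h : ∀ c ≥ 0, c * A - c ^ 2 / 2 * V ≤ D) : 1 / 2 * A ^ 2 ≤ D * V := by
  rcases hV.eq_or_lt with rfl | hV
  · obtain rfl : A = 0 := by
      by_contra hA0
      have hD : 0 ≤ D := by simpa using h 0 le_rfl
      have := h ((D + 1) / A) (by positivity)
      rw [div_mul_cancel₀ _ hA0] at this
      linarith
    simp
  · have := h (A / V) (by positivity)
    have key : A / V * A - (A / V) ^ 2 / 2 * V = A ^ 2 / (2 * V) := by field_simp; ring
    rw [key, div_le_iff₀ (by positivity)] at this
    linarith

lemma exists_lt_and_forall_le_two_mul {α : Type*} {g : α → ℝ} {s : Set α} {δ : ℝ} {x₀ : α}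
    (hg : BddAbove (g '' s)) (hδ : 0 ≤ δ) (hx₀ : x₀ ∈ s) (h : δ < g x₀) :
    ∃ y ∈ s, δ < g y ∧ ∀ x ∈ s, g x ≤ 2 * g y := by
  have hS : g x₀ ≤ sSup (g '' s) := le_csSup hg (mem_image_of_mem g hx₀)
  obtain ⟨_, ⟨y, hy, rfl⟩, hlt⟩ := exists_lt_of_lt_csSup (Set.Nonempty.image g ⟨x₀, hx₀⟩)
    (max_lt (h.trans_le hS) (by linarith : sSup (g '' s) / 2 < sSup (g '' s)))
  refine ⟨y, hy, (le_max_left _ _).trans_lt hlt, fun x hx => ?_⟩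
  have := le_csSup hg (mem_image_of_mem g hx)
  linarith [(le_max_right _ _).trans_lt hlt]

lemma abs_sub_eq_abs_add_abs_of_mul_nonpos {a b : ℝ} (h : a * b ≤ 0) : |a - b| = |a| + |b| := by
  rw [sub_eq_add_neg, ← abs_neg b, abs_add_eq_add_abs_iff]
  simpa using mul_nonpos_iff.1 h

lemma pos_of_neg_le_of_lt_abs {a δ : ℝ} (h : -δ ≤ a) (ha : δ < |a|) : 0 < a := by
  rcases abs_cases a with ⟨h₁, -⟩ | ⟨h₁, -⟩ <;> linarith

lemma BoundedVariationOn.intervalIntegrable {f : ℝ → ℝ} (hf : BoundedVariationOn f univ)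
    (a b : ℝ) : IntervalIntegrable f volume a b := by
  obtain ⟨p, q, hp, hq, rfl⟩ := hf.locallyBoundedVariationOn.exists_monotoneOn_sub_monotoneOn
  exact (monotoneOn_univ.1 hp).intervalIntegrable.sub (monotoneOn_univ.1 hq).intervalIntegrable

section BoundedVariation

variable {α : Type*} [LinearOrder α] {f : α → ℝ}

lemma BoundedVariationOn.abs_le_of_eq_zero {s : Set α} (hf : BoundedVariationOn f s) {x y : α}
    (hx : x ∈ s) (hy : y ∈ s) (hfy : f y = 0) : |f x| ≤ (eVariationOn f s).toReal := by
  simpa [Real.dist_eq, hfy] using hf.dist_le hx hy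

lemma BoundedVariationOn.eVariationOn_Icc_toReal_add (hf : BoundedVariationOn f univ) {a b c : α}
    (hab : a ≤ b) (hbc : b ≤ c) :
    (eVariationOn f (Icc a b)).toReal + (eVariationOn f (Icc b c)).toReal
      = (eVariationOn f (Icc a c)).toReal := by
  rw [← ENNReal.toReal_add (hf.mono (subset_univ _)) (hf.mono (subset_univ _))]
  simpa using congrArg ENNReal.toReal (eVariationOn.Icc_add_Icc f hab hbc (mem_univ b))

lemma BoundedVariationOn.abs_add_abs_le (hf : BoundedVariationOn f univ) {p w y : α}
    (hpw : p ≤ w) (hwy : w ≤ y) (h : f p * f w ≤ 0) :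
    |f p| + |f y| ≤ (eVariationOn f (Icc p y)).toReal := by
  have hpw' := (hf.mono (subset_univ (Icc p w))).dist_le (left_mem_Icc.2 hpw) (right_mem_Icc.2 hpw)
  have hwy' := (hf.mono (subset_univ (Icc w y))).dist_le (left_mem_Icc.2 hwy) (right_mem_Icc.2 hwy)
  rw [Real.dist_eq, abs_sub_eq_abs_add_abs_of_mul_nonpos h] at hpw'
  rw [Real.dist_eq] at hwy'
  rw [← hf.eVariationOn_Icc_toReal_add hpw hwy]
  linarith [abs_sub_abs_le_abs_sub (f y) (f w), abs_sub_comm (f w) (f y)]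

lemma BoundedVariationOn.sum_abs_sub_le {z : ℕ → α} {k : ℕ} (hf : BoundedVariationOn f univ)
    (hz : MonotoneOn z (Iic k)) :
    ∑ i ∈ Finset.range k, |f (z (i + 1)) - f (z i)| ≤ (eVariationOn f univ).toReal := by
  have := ENNReal.toReal_mono hf
    (eVariationOn.sum_le_of_monotoneOn_Iic (f := f) hz fun _ _ => mem_univ _)
  rw [ENNReal.toReal_sum fun _ _ => edist_ne_top _ _] at this
  simpa [edist_dist, Real.dist_eq] using this

end BoundedVariation

section IntegralEstimates

variable {u v M : ℝ}

lemma integral_le_mul_of_le_on_Ioo {g : ℝ → ℝ} (huv : u ≤ v) (hg : IntervalIntegrable g volume u v)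
    (h : ∀ x ∈ Ioo u v, g x ≤ M) : ∫ x in u..v, g x ≤ M * (v - u) := by
  simpa [mul_comm] using
    intervalIntegral.integral_mono_on_of_le_Ioo huv hg intervalIntegrable_const h

lemma sq_div_le_integral_of_ramp_right {G : ℝ → ℝ} {a : ℝ} (hM : 0 < M) (ha : 0 ≤ a)
    (haM : a ≤ M * (v - u)) (haG : a ≤ G v) (hG : ∀ x ∈ Icc u v, 0 ≤ G x)
    (hramp : ∀ x ∈ Icc u v, G v - M * (v - x) ≤ G x) (hGi : IntervalIntegrable G volume u v) :
    a ^ 2 / (2 * M) ≤ ∫ x in u..v, G x := by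
  set r := a / M
  have hr : 0 ≤ r := by positivity
  have hru : u ≤ v - r := by rw [le_sub_comm, div_le_iff₀ hM]; linarith
  have htent : ∫ x in (v - r)..v, (a - M * (v - x)) = a ^ 2 / (2 * M) := by
    rw [intervalIntegral.integral_comp_sub_left (fun x => a - M * x), sub_self, sub_sub_cancel,
      intervalIntegral.integral_sub intervalIntegrable_const
        ((by fun_prop : Continuous fun x => M * x).intervalIntegrable _ _),
      intervalIntegral.integral_const, intervalIntegral.integral_const_mul, integral_id]
    simp only [r, smul_eq_mul]
    field_simp
    ring
  calc a ^ 2 / (2 * M) = ∫ x in (v - r)..v, (a - M * (v - x)) := htent.symm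
    _ ≤ ∫ x in (v - r)..v, G x := by
      refine intervalIntegral.integral_mono_on (by linarith)
        ((by fun_prop : Continuous fun x => a - M * (v - x)).intervalIntegrable _ _)
        (hGi.mono_set ?_) ?_
      · rw [uIcc_of_le (by linarith), uIcc_of_le (by linarith)]
        exact Icc_subset_Icc hru le_rfl
      · intro x hx
        linarith [hramp x ⟨hru.trans hx.1, hx.2⟩]
    _ ≤ ∫ x in u..v, G x :=
      intervalIntegral.integral_mono_interval hru (by linarith) le_rfl
        ((ae_restrict_iff' measurableSet_Ioc).2 <|
          ae_of_all _ fun x hx => hG x (Ioc_subset_Icc_self hx)) hGi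

lemma sq_div_le_integral_of_ramp_left {G : ℝ → ℝ} {a : ℝ} (hM : 0 < M) (ha : 0 ≤ a)
    (haM : a ≤ M * (v - u)) (haG : a ≤ G u) (hG : ∀ x ∈ Icc u v, 0 ≤ G x)
    (hramp : ∀ x ∈ Icc u v, G u - M * (x - u) ≤ G x) (hGi : IntervalIntegrable G volume u v) :
    a ^ 2 / (2 * M) ≤ ∫ x in u..v, G x := by
  have hneg : ∀ x ∈ Icc (-v) (-u), -x ∈ Icc u v := fun x hx =>
    ⟨by linarith [hx.2], by linarith [hx.1]⟩
  have := sq_div_le_integral_of_ramp_right (G := fun x => G (-x)) (u := -v) (v := -u) hM ha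
    (by linarith) (by simpa using haG) (fun x hx => hG (-x) (hneg x hx))
    (fun x hx => by simp only [neg_neg]; linarith [hramp (-x) (hneg x hx)])
    ((IntervalIntegrable.iff_comp_neg (by simp)).1 hGi).symm
  simpa [intervalIntegral.integral_comp_neg] using this

end IntegralEstimates

def AlmostSignedOn (f : ℝ → ℝ) (δ : ℝ) (s : Set ℝ) : Prop :=
  (∀ x ∈ s, -δ ≤ f x) ∨ ∀ x ∈ s, f x ≤ δ

section Pieces

variable {f : ℝ → ℝ} {u v δ M c : ℝ}

lemma le_integral_primitive_of_abs_le (hf : ∀ a b, IntervalIntegrable f volume a b)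
    (hF : ∀ x ∈ Icc u v, 0 ≤ ∫ t in (0:ℝ)..x, f t) (huv : u ≤ v) (hδ : 0 ≤ δ) (hc : 0 ≤ c)
    (hfδ : ∀ x ∈ Ioo u v, |f x| ≤ δ) :
    c * (∫ x in u..v, |f x|) - 2 * c * δ * (v - u) ≤ ∫ x in u..v, ∫ t in (0:ℝ)..x, f t := by
  have h₁ := mul_le_mul_of_nonneg_left (integral_le_mul_of_le_on_Ioo huv (hf u v).abs hfδ) hc
  have h₂ := intervalIntegral.integral_nonneg (μ := volume) huv hF
  nlinarith [mul_nonneg (mul_nonneg hc hδ) (sub_nonneg.2 huv)]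

lemma le_integral_primitive_of_almostSignedOn (hf : ∀ a b, IntervalIntegrable f volume a b)
    (hF : ∀ x ∈ Icc u v, 0 ≤ ∫ t in (0:ℝ)..x, f t) (huv : u ≤ v) (hδ : 0 ≤ δ) (hM : 0 < M)
    (hc : 0 ≤ c) (hs : AlmostSignedOn f δ (Ioo u v)) (hfM : ∀ x ∈ Ioo u v, |f x| ≤ M) :
    c * (∫ x in u..v, |f x|) - 2 * c * δ * (v - u) - c ^ 2 / 2 * M
      ≤ ∫ x in u..v, ∫ t in (0:ℝ)..x, f t := by
  set F := fun x => ∫ t in (0:ℝ)..x, f t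
  have hFi : IntervalIntegrable F volume u v :=
    (intervalIntegral.continuous_primitive hf 0).intervalIntegrable _ _
  have hFsub : ∀ x y, F y - F x = ∫ t in x..y, f t := fun x y =>
    intervalIntegral.integral_interval_sub_left (hf 0 y) (hf 0 x)
  have hFu := hF u (left_mem_Icc.2 huv)
  have hFv := hF v (right_mem_Icc.2 huv)
  set a := (∫ x in u..v, |f x|) - 2 * δ * (v - u)
  have haM : a ≤ M * (v - u) := by
    have := integral_le_mul_of_le_on_Ioo huv (hf u v).abs hfM
    nlinarith [mul_nonneg hδ (sub_nonneg.2 huv)]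
  rcases lt_or_ge a 0 with ha | ha
  · have := intervalIntegral.integral_nonneg (μ := volume) huv hF
    nlinarith [mul_nonneg hc hM.le, mul_nonpos_of_nonneg_of_nonpos hc ha.le]
  calc c * (∫ x in u..v, |f x|) - 2 * c * δ * (v - u) - c ^ 2 / 2 * M
      = c * a - c ^ 2 / 2 * M := by ring
    _ ≤ a ^ 2 / (2 * M) := mul_sub_sq_mul_le_sq_div hM
    _ ≤ ∫ x in u..v, F x := by
      rcases hs with hpos | hneg
      · have hmass := integral_le_mul_of_le_on_Ioo (g := fun x => |f x| - f x) (M := 2 * δ) huv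
          ((hf u v).abs.sub (hf u v))
          (fun x hx => by rcases abs_cases (f x) with ⟨h, -⟩ | ⟨h, -⟩ <;> linarith [hpos x hx])
        rw [intervalIntegral.integral_sub (hf u v).abs (hf u v)] at hmass
        refine sq_div_le_integral_of_ramp_right hM ha haM ?_ hF (fun x hx => ?_) hFi
        · linarith [hFsub u v]
        · have := integral_le_mul_of_le_on_Ioo hx.2 (hf x v)
            (fun y hy => (le_abs_self _).trans (hfM y ⟨hx.1.trans_lt hy.1, hy.2⟩))
          linarith [hFsub x v]
      · have hmass := integral_le_mul_of_le_on_Ioo (g := fun x => |f x| + f x) (M := 2 * δ) huv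
          ((hf u v).abs.add (hf u v))
          (fun x hx => by rcases abs_cases (f x) with ⟨h, -⟩ | ⟨h, -⟩ <;> linarith [hneg x hx])
        rw [intervalIntegral.integral_add (hf u v).abs (hf u v)] at hmass
        refine sq_div_le_integral_of_ramp_left hM ha haM ?_ hF (fun x hx => ?_) hFi
        · linarith [hFsub u v]
        · have := integral_le_mul_of_le_on_Ioo (g := fun y => -f y) hx.1 (hf u x).neg
            (fun y hy => (neg_le_abs _).trans (hfM y ⟨hy.1, hy.2.trans_le hx.2⟩))
          rw [intervalIntegral.integral_neg] at this
          linarith [hFsub u x]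

end Pieces

namespace AlmostSignedOn

variable {f : ℝ → ℝ} {δ : ℝ} {s t : Set ℝ}

lemma mono (h : AlmostSignedOn f δ s) (hts : t ⊆ s) : AlmostSignedOn f δ t :=
  h.imp (fun h x hx => h x (hts hx)) (fun h x hx => h x (hts hx))

lemma mul_pos (h : AlmostSignedOn f δ s) {x y : ℝ} (hx : x ∈ s) (hy : y ∈ s)
    (hfx : δ < |f x|) (hfy : δ < |f y|) : 0 < f x * f y := by
  rcases h with h | h
  · exact _root_.mul_pos (pos_of_neg_le_of_lt_abs (h x hx) hfx)
      (pos_of_neg_le_of_lt_abs (h y hy) hfy)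
  · have hx' := pos_of_neg_le_of_lt_abs (neg_le_neg (h x hx)) (by rwa [abs_neg])
    have hy' := pos_of_neg_le_of_lt_abs (neg_le_neg (h y hy)) (by rwa [abs_neg])
    nlinarith

lemma exists_mul_neg_of_not (h : ¬ AlmostSignedOn f δ s) (hδ : 0 ≤ δ) {r : ℝ} (hr : r ≠ 0) :
    ∃ w ∈ s, δ < |f w| ∧ r * f w < 0 := by
  simp only [AlmostSignedOn, not_or, not_forall, not_le] at h
  obtain ⟨⟨w₁, hw₁, h₁⟩, ⟨w₂, hw₂, h₂⟩⟩ := h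
  rcases hr.lt_or_gt with hr | hr
  · exact ⟨w₂, hw₂, h₂.trans_le (le_abs_self _), mul_neg_of_neg_of_pos hr (by linarith)⟩
  · exact ⟨w₁, hw₁, (lt_neg.1 h₁).trans_le (neg_le_abs _), mul_neg_of_pos_of_neg hr (by linarith)⟩

lemma exists_peak_of_forall_neg_le (h : ∀ x ∈ s, -δ ≤ f x) (hδ : 0 ≤ δ) {B : ℝ}
    (hB : ∀ x, |f x| ≤ B) {x₀ : ℝ} (hx₀ : x₀ ∈ s) (hfx₀ : δ < |f x₀|) :
    ∃ y ∈ s, δ < |f y| ∧ ∀ x ∈ s, |f x| ≤ 2 * |f y| := by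
  have hbdd : BddAbove (f '' s) := ⟨B, by rintro _ ⟨x, -, rfl⟩; exact (le_abs_self _).trans (hB x)⟩
  have hpos := pos_of_neg_le_of_lt_abs (h x₀ hx₀) hfx₀
  obtain ⟨y, hy, hδy, hle⟩ :=
    exists_lt_and_forall_le_two_mul hbdd hδ hx₀ (by rwa [← abs_of_pos hpos])
  have hfy := abs_of_pos (hδ.trans_lt hδy)
  refine ⟨y, hy, by rwa [hfy], fun x hx => ?_⟩
  rw [hfy]
  exact abs_le.2 ⟨by linarith [h x hx], hle x hx⟩

lemma exists_peak (h : AlmostSignedOn f δ s) (hδ : 0 ≤ δ) {B : ℝ} (hB : ∀ x, |f x| ≤ B) {x₀ : ℝ}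
    (hx₀ : x₀ ∈ s) (hfx₀ : δ < |f x₀|) : ∃ y ∈ s, δ < |f y| ∧ ∀ x ∈ s, |f x| ≤ 2 * |f y| := by
  rcases h with h | h
  · exact exists_peak_of_forall_neg_le h hδ hB hx₀ hfx₀
  · simpa using exists_peak_of_forall_neg_le (f := -f) (fun x hx => by simpa using h x hx) hδ
      (B := B) (by simpa using hB) hx₀ (by simpa using hfx₀)

end AlmostSignedOn

lemma BoundedVariationOn.exists_almostSignedOn_Ioo {f : ℝ → ℝ} (hf : BoundedVariationOn f univ)
    {δ : ℝ} (hδ : 0 < δ) (u : ℝ) : ∃ x > u, AlmostSignedOn f δ (Ioo u x) := by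
  set L := Function.rightLim f u
  obtain ⟨x, hx, hsub⟩ := mem_nhdsGT_iff_exists_Ioo_subset.1 <| (hf.tendsto_rightLim u).eventually
    (Ioo_mem_nhds (by linarith : L - δ < L) (by linarith : L < L + δ))
  refine ⟨x, hx, ?_⟩
  rcases le_total 0 L with hL | hL
  · exact Or.inl fun y hy => by linarith [(hsub hy).1]
  · exact Or.inr fun y hy => by linarith [(hsub hy).2]

lemma BoundedVariationOn.exists_maximal_almostSignedOn {f : ℝ → ℝ} (hf : BoundedVariationOn f univ)
    {δ : ℝ} (hδ : 0 < δ) {u : ℝ} (hu : u < 1) :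
    ∃ t ∈ Ioc u 1, AlmostSignedOn f δ (Ioo u t) ∧
      ∀ x ∈ Ioc t 1, ¬ AlmostSignedOn f δ (Ioo u x) := by
  set T := {x ∈ Icc u 1 | AlmostSignedOn f δ (Ioo u x)}
  have hT : BddAbove T := ⟨1, fun x hx => hx.1.2⟩
  obtain ⟨x₀, hux₀, hx₀⟩ := hf.exists_almostSignedOn_Ioo hδ u
  have hmem : min x₀ 1 ∈ T := ⟨⟨le_min hux₀.le hu.le, min_le_right _ _⟩,
    hx₀.mono (Ioo_subset_Ioo_right (min_le_left _ _))⟩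
  have hut : u < sSup T := (lt_min hux₀ hu).trans_le (le_csSup hT hmem)
  refine ⟨sSup T, ⟨hut, csSup_le ⟨_, hmem⟩ fun x hx => hx.1.2⟩, ?_, fun x hx hxT => ?_⟩
  · by_contra hns
    obtain ⟨w₁, hw₁, hfw₁, h₁⟩ := AlmostSignedOn.exists_mul_neg_of_not hns hδ.le one_ne_zero
    obtain ⟨w₂, hw₂, hfw₂, h₂⟩ :=
      AlmostSignedOn.exists_mul_neg_of_not hns hδ.le (neg_ne_zero.2 one_ne_zero)
    obtain ⟨x, hxT, hx⟩ := exists_lt_of_lt_csSup ⟨_, hmem⟩ (max_lt hw₁.2 hw₂.2)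
    have := hxT.2.mul_pos ⟨hw₁.1, (le_max_left _ _).trans_lt hx⟩
      ⟨hw₂.1, (le_max_right _ _).trans_lt hx⟩ hfw₁ hfw₂
    nlinarith
  · exact (le_csSup hT ⟨⟨hut.le.trans hx.1.le, hx.2⟩, hxT⟩).not_gt hx.1

def IsAltChain (f : ℝ → ℝ) (δ a : ℝ) (k : ℕ) (z : ℕ → ℝ) : Prop :=
  (∀ i ≤ k, z i ∈ Ioc a 1 ∧ δ < |f (z i)|) ∧
    ∀ i < k, z i < z (i + 1) ∧ f (z i) * f (z (i + 1)) < 0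

def AltChainLengthLT (f : ℝ → ℝ) (δ a : ℝ) (n : ℕ) : Prop :=
  ∀ k z, IsAltChain f δ a k z → k < n

section AltChains

variable {f : ℝ → ℝ} {δ a : ℝ} {n k : ℕ} {z : ℕ → ℝ}

lemma IsAltChain.mul_le (hz : IsAltChain f δ a k z) (hf : BoundedVariationOn f univ) :
    k * (2 * δ) ≤ (eVariationOn f univ).toReal := by
  have hmono : MonotoneOn z (Iic k) :=
    (strictMonoOn_Iic_of_lt_succ fun i hi => (hz.2 i hi).1).monotoneOn
  refine le_trans ?_ (hf.sum_abs_sub_le hmono)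
  have hstep : ∀ i ∈ Finset.range k, 2 * δ ≤ |f (z (i + 1)) - f (z i)| := by
    intro i hi
    rw [Finset.mem_range] at hi
    rw [abs_sub_comm, abs_sub_eq_abs_add_abs_of_mul_nonpos (hz.2 i hi).2.le]
    linarith [(hz.1 i hi.le).2, (hz.1 (i + 1) hi).2]
  simpa using Finset.card_nsmul_le_sum _ _ _ hstep

lemma exists_altChainLengthLT (hf : BoundedVariationOn f univ) (hδ : 0 < δ) (a : ℝ) :
    ∃ n, AltChainLengthLT f δ a n :=
  ⟨⌊(eVariationOn f univ).toReal / (2 * δ)⌋₊ + 1, fun _ _ hz =>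
    Nat.lt_succ_of_le (Nat.le_floor ((le_div_iff₀ (by positivity)).2 (hz.mul_le hf)))⟩

lemma AltChainLengthLT.abs_le (h : AltChainLengthLT f δ a 0) : ∀ x ∈ Ioc a 1, |f x| ≤ δ := by
  by_contra! ⟨x, hx, hfx⟩
  exact Nat.not_lt_zero _ (h 0 (fun _ => x) ⟨fun _ _ => ⟨hx, hfx⟩, fun _ h => absurd h (by omega)⟩)

lemma AltChainLengthLT.of_forall_not_almostSignedOn {u t : ℝ} (h : AltChainLengthLT f δ u (n + 1))
    (hδ : 0 ≤ δ) (hut : u ≤ t) (hmax : ∀ x ∈ Ioc t 1, ¬ AlmostSignedOn f δ (Ioo u x)) :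
    AltChainLengthLT f δ t n := by
  intro k z hz
  obtain ⟨hz₀, hfz₀⟩ := hz.1 0 k.zero_le
  have hne : f (z 0) ≠ 0 := fun h0 => by rw [h0, abs_zero] at hfz₀; linarith
  obtain ⟨w, hw, hfw, hwz⟩ := AlmostSignedOn.exists_mul_neg_of_not (hmax _ hz₀) hδ hne
  have := h (k + 1) (fun | 0 => w | i + 1 => z i) ⟨?_, ?_⟩
  · omega
  · rintro (_ | i) hi
    · exact ⟨⟨hw.1, hw.2.le.trans hz₀.2⟩, hfw⟩
    · obtain ⟨hzi, hfzi⟩ := hz.1 i (by omega)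
      exact ⟨⟨hut.trans_lt hzi.1, hzi.2⟩, hfzi⟩
  · rintro (_ | i) hi
    · exact ⟨hw.2, by rw [mul_comm]; exact hwz⟩
    · exact hz.2 i (by omega)

end AltChains

lemma AlmostSignedOn.abs_add_abs_le_of_forall_not {f : ℝ → ℝ} {δ u t y : ℝ}
    (h : AlmostSignedOn f δ (Ioo u t)) (hf : BoundedVariationOn f univ) (hδ : 0 ≤ δ)
    (hmax : ∀ x ∈ Ioc t 1, ¬ AlmostSignedOn f δ (Ioo u x)) (hy : y ∈ Ioo u t) (hfy : δ < |f y|) :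
    ∀ x ∈ Ioc t 1, |f y| + |f x| ≤ (eVariationOn f (Icc y x)).toReal := by
  intro x hx
  have hne : f y ≠ 0 := fun h0 => by rw [h0, abs_zero] at hfy; linarith
  obtain ⟨w, hw, hfw, hyw⟩ := AlmostSignedOn.exists_mul_neg_of_not (hmax x hx) hδ hne
  have htw : t ≤ w := not_lt.1 fun hwt => (h.mul_pos hy ⟨hw.1, hwt⟩ hfy hfw).not_gt hyw
  exact hf.abs_add_abs_le (hy.2.le.trans htw) hw.2.le hyw.le

section MainEstimate

variable {f : ℝ → ℝ} {δ c b : ℝ}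

lemma le_integral_primitive_of_abs_le_on_Ioo_one {u p : ℝ} (hf : BoundedVariationOn f univ)
    (hfb : f b = 0) (hF : ∀ x ∈ Icc (0:ℝ) 1, 0 ≤ ∫ t in (0:ℝ)..x, f t) (hδ : 0 ≤ δ) (hc : 0 ≤ c)
    (hpb : p ≤ b) (hu0 : 0 ≤ u) (hu1 : u ≤ 1) (hsmall : ∀ x ∈ Ioo u 1, |f x| ≤ δ) :
    c * (∫ x in u..1, |f x|) - 2 * c * δ * (1 - u)
        - c ^ 2 / 2 * ((eVariationOn f (Icc p b)).toReal - |f p|)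
      ≤ ∫ x in u..1, ∫ t in (0:ℝ)..x, f t := by
  have := le_integral_primitive_of_abs_le hf.intervalIntegrable
    (fun x hx => hF x ⟨hu0.trans hx.1, hx.2⟩) hu1 hδ hc hsmall
  have := (hf.mono (subset_univ _)).abs_le_of_eq_zero (left_mem_Icc.2 hpb) (right_mem_Icc.2 hpb) hfb
  nlinarith [sq_nonneg c]

/- `p` is the peak of the previous piece (initially a point left of `0` where `f` vanishes). The
last hypothesis says that `f` can pass through `0` between `p` and any later point, so that the
variation of `f` on `[p, b]`, minus `|f p|`, is still available for the peaks of the remaining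
pieces. -/
lemma le_integral_primitive_of_altChainLengthLT (hf : BoundedVariationOn f univ) (hb : 1 ≤ b)
    (hfb : f b = 0) (hF : ∀ x ∈ Icc (0:ℝ) 1, 0 ≤ ∫ t in (0:ℝ)..x, f t) (hδ : 0 < δ) (hc : 0 ≤ c)
    (n : ℕ) : ∀ u p, p ≤ u → 0 ≤ u → u ≤ 1 → AltChainLengthLT f δ u n →
      (∀ y ∈ Ioc u 1, |f p| + |f y| ≤ (eVariationOn f (Icc p y)).toReal) →
      c * (∫ x in u..1, |f x|) - 2 * c * δ * (1 - u)
          - c ^ 2 / 2 * ((eVariationOn f (Icc p b)).toReal - |f p|)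
        ≤ ∫ x in u..1, ∫ t in (0:ℝ)..x, f t := by
  have hii := hf.intervalIntegrable
  have hFi := (intervalIntegral.continuous_primitive hii 0).intervalIntegrable (μ := volume)
  induction n with
  | zero =>
    intro u p hpu hu0 hu1 hchain _
    exact le_integral_primitive_of_abs_le_on_Ioo_one hf hfb hF hδ.le hc (by linarith) hu0 hu1
      fun x hx => hchain.abs_le x (Ioo_subset_Ioc_self hx)
  | succ n ih =>
    intro u p hpu hu0 hu1 hchain hreset
    rcases hu1.eq_or_lt with rfl | hu1
    · exact le_integral_primitive_of_abs_le_on_Ioo_one hf hfb hF hδ.le hc (by linarith) hu0 le_rfl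
        (by simp)
    obtain ⟨t, ⟨hut, ht1⟩, hsigned, hmax⟩ := hf.exists_maximal_almostSignedOn hδ hu1
    have hchain' := hchain.of_forall_not_almostSignedOn hδ.le hut.le hmax
    have hFut : ∀ x ∈ Icc u t, 0 ≤ ∫ s in (0:ℝ)..x, f s :=
      fun x hx => hF x ⟨hu0.trans hx.1, hx.2.trans ht1⟩
    rw [← intervalIntegral.integral_add_adjacent_intervals (hii u t).abs (hii t 1).abs,
      ← intervalIntegral.integral_add_adjacent_intervals (hFi u t) (hFi t 1)]
    by_cases hbig : ∃ x₀ ∈ Ioo u t, δ < |f x₀|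
    · obtain ⟨x₀, hx₀, hfx₀⟩ := hbig
      obtain ⟨y, hy, hfy, hpeak⟩ := hsigned.exists_peak hδ.le
        (fun x => hf.abs_le_of_eq_zero (mem_univ x) (mem_univ b) hfb) hx₀ hfx₀
      have hpiece := le_integral_primitive_of_almostSignedOn hii hFut hut.le hδ.le
        (by linarith : 0 < 2 * |f y|) hc hsigned hpeak
      have hrest := ih t y hy.2.le (hu0.trans hut.le) ht1 hchain'
        (hsigned.abs_add_abs_le_of_forall_not hf hδ.le hmax hy hfy)
      have hpy := hreset y ⟨hy.1, hy.2.le.trans ht1⟩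
      have hsplit :=
        hf.eVariationOn_Icc_toReal_add (hpu.trans hy.1.le) (hy.2.le.trans (ht1.trans hb))
      have := mul_le_mul_of_nonneg_left (by linarith : 2 * |f y| +
        ((eVariationOn f (Icc y b)).toReal - |f y|) ≤ (eVariationOn f (Icc p b)).toReal - |f p|)
        (by positivity : 0 ≤ c ^ 2 / 2)
      linarith
    · push Not at hbig
      have hpiece := le_integral_primitive_of_abs_le hii hFut hut.le hδ.le hc hbig
      have hrest := ih t p (hpu.trans hut.le) (hu0.trans hut.le) ht1 hchain'
        fun y hy => hreset y ⟨hut.trans hy.1, hy.2⟩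
      linarith

lemma mul_integral_abs_sub_le_integral_primitive (hf : BoundedVariationOn f univ)
    (hzero : ∀ x, x ∉ Icc (0:ℝ) 1 → f x = 0) (hF : ∀ x ∈ Icc (0:ℝ) 1, 0 ≤ ∫ t in (0:ℝ)..x, f t)
    (hc : 0 ≤ c) :
    c * (∫ x in (0:ℝ)..1, |f x|) - c ^ 2 / 2 * (eVariationOn f univ).toReal
      ≤ ∫ x in (0:ℝ)..1, ∫ t in (0:ℝ)..x, f t := by
  have hf₁ : f (-1) = 0 := hzero _ (by norm_num)
  have hV : (eVariationOn f (Icc (-1) 2)).toReal ≤ (eVariationOn f univ).toReal :=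
    ENNReal.toReal_mono hf (eVariationOn.mono f (subset_univ _))
  have hslack : ∀ δ > 0, c * (∫ x in (0:ℝ)..1, |f x|) - 2 * c * δ
      - c ^ 2 / 2 * (eVariationOn f univ).toReal ≤ ∫ x in (0:ℝ)..1, ∫ t in (0:ℝ)..x, f t := by
    intro δ hδ
    obtain ⟨n, hn⟩ := exists_altChainLengthLT hf hδ 0
    have := le_integral_primitive_of_altChainLengthLT hf one_le_two (hzero 2 (by norm_num)) hF hδ
      hc n 0 (-1) (by norm_num) le_rfl zero_le_one hn
      fun y hy => hf.abs_add_abs_le le_rfl (by linarith [hy.1]) (by simp [hf₁])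
    rw [hf₁, abs_zero, sub_zero, sub_zero, mul_one] at this
    nlinarith [mul_le_mul_of_nonneg_left hV (by positivity : 0 ≤ c ^ 2 / 2)]
  have hlim : Tendsto (fun δ => c * (∫ x in (0:ℝ)..1, |f x|) - 2 * c * δ
      - c ^ 2 / 2 * (eVariationOn f univ).toReal) (𝓝[>] 0)
      (𝓝 (c * (∫ x in (0:ℝ)..1, |f x|) - 2 * c * 0 - c ^ 2 / 2 * (eVariationOn f univ).toReal)) :=
    ((by fun_prop : Continuous _).tendsto 0).mono_left nhdsWithin_le_nhds
  simpa using le_of_tendsto hlim (eventually_nhdsWithin_of_forall hslack)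

end MainEstimate

/-- For a function `f` of bounded total variation on `[0,1]` (vanishing outside `[0,1]`, so
that the total variation over `ℝ` also includes the boundary jumps `|f(0-)|` and `|f(1+)|`),
if `F(x) = ∫₀ˣ f ≥ 0` on `[0,1]`, then
`(∫₀¹ F) · (total variation of f) ≥ (1/2) (∫₀¹ |f|)²`. -/
theorem bv_key_inequality (f : ℝ → ℝ)
    (hzero : ∀ x, x ∉ Set.Icc (0:ℝ) 1 → f x = 0)
    (hBV : eVariationOn f Set.univ ≠ ⊤)
    (hF : ∀ x ∈ Set.Icc (0:ℝ) 1, 0 ≤ ∫ t in (0:ℝ)..x, f t) :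
    (1/2) * (∫ x in (0:ℝ)..1, |f x|)^2
      ≤ (∫ x in (0:ℝ)..1, ∫ t in (0:ℝ)..x, f t) * (eVariationOn f Set.univ).toReal :=
  one_half_mul_sq_le_mul_of_forall
    (intervalIntegral.integral_nonneg zero_le_one fun _ _ => abs_nonneg _) ENNReal.toReal_nonneg
    fun _ hc => mul_integral_abs_sub_le_integral_primitive hBV hzero hF hc
end

section
/- Let g be a nonnegative measurable function on [0,1] bounded by c > 0, and let f be a C^2 concave decreasing function on [0,1]. Then -integral from 0 to 1 of f'(x)*g(x) dx <= c * ( f(1 - (1/c)*integral from 0 to 1 of g(z) dz) - f(1) ). -/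
open MeasureTheory Set intervalIntegral

/-!
Write `φ = f'`, which is continuous and, by concavity, antitone. Among weights `0 ≤ g ≤ c` of
fixed mass `J = ∫ g`, the integral `∫ φ g` is smallest when the mass sits where `φ` is smallest,
i.e. for `g = c · 1_{[a,1]}` with `a = 1 - J / c`; pointwise this is
`(φ x - φ a) (g x - c · 1_{x ≥ a}) ≥ 0`. For that weight, `-∫ φ g = c (f a - f 1)`.
-/

theorem mul_integral_le_integral_mul_of_antitoneOn {φ g : ℝ → ℝ} {u v a c : ℝ}
    (ha : a ∈ Icc u v) (hφ : AntitoneOn φ (Icc u v))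
    (hg : ∀ x ∈ Icc u v, 0 ≤ g x ∧ g x ≤ c)
    (hg_int : IntervalIntegrable g volume u v)
    (hφg_int : IntervalIntegrable (fun x => φ x * g x) volume u v)
    (hmass : ∫ x in u..v, g x = c * (v - a)) :
    c * ∫ x in a..v, φ x ≤ ∫ x in u..v, φ x * g x := by
  have hua : uIcc u a ⊆ uIcc u v := uIcc_subset_uIcc left_mem_uIcc (mem_uIcc_of_le ha.1 ha.2)
  have hav : uIcc a v ⊆ uIcc u v := uIcc_subset_uIcc (mem_uIcc_of_le ha.1 ha.2) right_mem_uIcc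
  have hφ_int : IntervalIntegrable φ volume a v :=
    (hφ.mono (by simpa [uIcc_of_le ha.2] using Icc_subset_Icc_left ha.1)).intervalIntegrable
  have left : φ a * ∫ x in u..a, g x ≤ ∫ x in u..a, φ x * g x := by
    rw [← intervalIntegral.integral_const_mul]
    refine integral_mono_on ha.1 ((hg_int.mono_set hua).const_mul _) (hφg_int.mono_set hua) ?_
    intro x hx
    have hx' : x ∈ Icc u v := ⟨hx.1, hx.2.trans ha.2⟩
    exact mul_le_mul_of_nonneg_right (hφ hx' ha hx.2) (hg x hx').1
  have right : φ a * (∫ x in a..v, g x) + c * ((∫ x in a..v, φ x) - (v - a) * φ a)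
      ≤ ∫ x in a..v, φ x * g x := by
    have hφ_sub : IntervalIntegrable (fun x => φ x - φ a) volume a v :=
      hφ_int.sub intervalIntegrable_const
    have hlower_int := ((hg_int.mono_set hav).const_mul (φ a)).add (hφ_sub.const_mul c)
    have hlin : ∫ x in a..v, (φ a * g x + c * (φ x - φ a))
        = φ a * (∫ x in a..v, g x) + c * ((∫ x in a..v, φ x) - (v - a) * φ a) := by
      rw [integral_add ((hg_int.mono_set hav).const_mul _) (hφ_sub.const_mul _),
        intervalIntegral.integral_const_mul, intervalIntegral.integral_const_mul,
        integral_sub hφ_int intervalIntegrable_const, intervalIntegral.integral_const, smul_eq_mul]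
    rw [← hlin]
    refine integral_mono_on ha.2 hlower_int (hφg_int.mono_set hav) ?_
    intro x hx
    have hx' : x ∈ Icc u v := ⟨ha.1.trans hx.1, hx.2⟩
    have hφx : φ x ≤ φ a := hφ ha hx' hx.1
    have hgx : g x ≤ c := (hg x hx').2
    nlinarith [mul_nonneg (sub_nonneg.2 hφx) (sub_nonneg.2 hgx)]
  have hsplit := integral_add_adjacent_intervals (hφg_int.mono_set hua) (hφg_int.mono_set hav)
  have hmass_split := integral_add_adjacent_intervals (hg_int.mono_set hua) (hg_int.mono_set hav)
  rw [hmass] at hmass_split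
  linear_combination left + right - φ a * hmass_split + hsplit

theorem integral_derivWithin_Icc_of_contDiffOn_Icc_of_subset {f : ℝ → ℝ} {u v a b : ℝ}
    (hf : ContDiffOn ℝ 1 f (Icc u v)) (huv : u < v) (hua : u ≤ a) (hab : a ≤ b) (hbv : b ≤ v) :
    ∫ x in a..b, derivWithin f (Icc u v) x = f b - f a := by
  have hsub : Icc a b ⊆ Icc u v := Icc_subset_Icc hua hbv
  refine integral_eq_sub_of_hasDerivAt_of_le hab (hf.continuousOn.mono hsub) (fun x hx => ?_) ?_
  · have hx' : x ∈ Ioo u v := ⟨hua.trans_lt hx.1, hx.2.trans_le hbv⟩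
    exact ((hf.differentiableOn one_ne_zero x (Ioo_subset_Icc_self hx')).hasDerivWithinAt
      ).hasDerivAt (Icc_mem_nhds hx'.1 hx'.2)
  · exact ((hf.continuousOn_derivWithin (uniqueDiffOn_Icc huv) le_rfl).mono hsub
      ).intervalIntegrable_of_Icc hab

theorem extremal_inequality_general (g : ℝ → ℝ) (c : ℝ) (hc : 0 < c)
    (hg_meas : Measurable g)
    (hg : ∀ x ∈ Set.Icc (0:ℝ) 1, 0 ≤ g x ∧ g x ≤ c)
    (f : ℝ → ℝ) (hf : ContDiffOn ℝ 2 f (Set.Icc (0:ℝ) 1))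
    (hconc : ConcaveOn ℝ (Set.Icc (0:ℝ) 1) f) :
    -∫ x in (0:ℝ)..1, derivWithin f (Set.Icc (0:ℝ) 1) x * g x
      ≤ c * (f (1 - (1/c) * ∫ z in (0:ℝ)..1, g z) - f 1) := by
  set φ := derivWithin f (Icc (0:ℝ) 1)
  have hf1 : ContDiffOn ℝ 1 f (Icc 0 1) := hf.of_le one_le_two
  have hφ_cont : ContinuousOn φ (Icc 0 1) :=
    hf1.continuousOn_derivWithin (uniqueDiffOn_Icc one_pos) le_rfl
  have hφ_anti : AntitoneOn φ (Icc 0 1) :=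
    hconc.antitoneOn_derivWithin (hf1.differentiableOn one_ne_zero)
  have hg_int : IntegrableOn g (Icc 0 1) :=
    Measure.integrableOn_of_bounded (M := c) measure_Icc_lt_top.ne hg_meas.aestronglyMeasurable
      (ae_restrict_of_forall_mem measurableSet_Icc fun x hx =>
        abs_le.2 ⟨by linarith [(hg x hx).1], (hg x hx).2⟩)
  have hφg_int : IntegrableOn (fun x => φ x * g x) (Icc 0 1) :=
    hg_int.continuousOn_mul hφ_cont isCompact_Icc
  rw [← uIcc_of_le zero_le_one] at hg_int hφg_int
  set J := ∫ z in (0:ℝ)..1, g z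
  have hJ_nonneg : 0 ≤ J := integral_nonneg zero_le_one fun x hx => (hg x hx).1
  have hJ_le : J ≤ c := by
    simpa using integral_mono_on zero_le_one hg_int.intervalIntegrable intervalIntegrable_const
      fun x hx => (hg x hx).2
  have ha : 1 - 1 / c * J ∈ Icc (0:ℝ) 1 := by
    rw [one_div_mul_eq_div]
    exact ⟨sub_nonneg.2 ((div_le_one hc).2 hJ_le), sub_le_self _ (div_nonneg hJ_nonneg hc.le)⟩
  have key := mul_integral_le_integral_mul_of_antitoneOn ha hφ_anti hg
    hg_int.intervalIntegrable hφg_int.intervalIntegrable (by field_simp; ring)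
  rw [integral_derivWithin_Icc_of_contDiffOn_Icc_of_subset hf1 one_pos ha.1 ha.2 le_rfl] at key
  linarith

/-- The extremal inequality: for a nonnegative measurable `g ≤ c` on `[0,1]` and a `C²`
concave decreasing `f` on `[0,1]`,
`-∫₀¹ f'(x) g(x) dx ≤ c (f(1 - (1/c)∫₀¹ g) - f(1))`. -/
theorem extremal_inequality (g : ℝ → ℝ) (c : ℝ) (hc : 0 < c)
    (hg_meas : Measurable g)
    (hg : ∀ x ∈ Set.Icc (0:ℝ) 1, 0 ≤ g x ∧ g x ≤ c)
    (f : ℝ → ℝ) (hf : ContDiffOn ℝ 2 f (Set.Icc (0:ℝ) 1))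
    (hconc : ConcaveOn ℝ (Set.Icc (0:ℝ) 1) f)
    (hdec : AntitoneOn f (Set.Icc (0:ℝ) 1)) :
    -∫ x in (0:ℝ)..1, derivWithin f (Set.Icc (0:ℝ) 1) x * g x
      ≤ c * (f (1 - (1/c) * ∫ z in (0:ℝ)..1, g z) - f 1) :=
  extremal_inequality_general g c hc hg_meas hg f hf hconc
end

section
/- For integers r >= l >= 3, define a(x) = (1-(1-x)^(r-1))^(l-1) and b(x) = (l-1)^2*(r-1)^2*x*(1-x)^(2(r-2)) on (0,1]. Then the equation a(x) = b(x) has exactly one solution in (0,1]. -/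
/-!
Write `m = l - 1`, `n = r - 1`. For `0 < x < 1`, summing a geometric series gives
`1 - (1 - x)^n = x (1 - x)^(2(n-1)) ∑_{k<n} (1 - x)^(-(2(n-1) - k))`, so the equation becomes
`Φ x = m² n²` with `Φ x = (1 - (1 - x)^n)^(m-1) ∑_{k<n} (1 - x)^(-(2(n-1) - k))`. This is a product
of a positive increasing factor and a strictly increasing one (the `k = 0` exponent is positive as
`n ≥ 2`), so there is at most one solution; `x = 1` is not one. A solution exists by the
intermediate value theorem: at `x = 1/(2n)` Bernoulli's inequality gives `b ≥ m²/2 ≥ 1 ≥ a`, and at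
`x = 1` we have `a = 1 > 0 = b`.
-/

open Finset Set

lemma one_sub_pow_eq_mul_sum_inv_pow {y : ℝ} (hy : y ≠ 0) (n : ℕ) :
    1 - y ^ n = (1 - y) * y ^ (2 * (n - 1)) * ∑ k ∈ range n, y⁻¹ ^ (2 * (n - 1) - k) := by
  have hterm : ∀ k ∈ range n, y ^ (2 * (n - 1)) * y⁻¹ ^ (2 * (n - 1) - k) = y ^ k := by
    intro k hk
    have hk : k ≤ 2 * (n - 1) := by have := mem_range.mp hk; omega
    rw [inv_pow, ← div_eq_mul_inv, div_eq_iff (pow_ne_zero _ hy), ← pow_add, Nat.add_sub_cancel' hk]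
  rw [mul_assoc, mul_sum, sum_congr rfl hterm, mul_neg_geom_sum]

/-- The quotient `(1 - (1 - x) ^ n) ^ m / (x * (1 - x) ^ (2 * (n - 1)))` for `m ≥ 1` and `x ≠ 1`,
written so that it is visibly increasing in `x`. -/
noncomputable def crossingRatio (m n : ℕ) (x : ℝ) : ℝ :=
  (1 - (1 - x) ^ n) ^ (m - 1) * ∑ k ∈ range n, (1 - x)⁻¹ ^ (2 * (n - 1) - k)

lemma pow_eq_mul_crossingRatio {m : ℕ} (hm : 1 ≤ m) (n : ℕ) {x : ℝ} (hx : x ≠ 1) :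
    (1 - (1 - x) ^ n) ^ m = x * (1 - x) ^ (2 * (n - 1)) * crossingRatio m n x := by
  obtain ⟨m, rfl⟩ := Nat.exists_eq_add_of_le' hm
  rw [crossingRatio, Nat.add_sub_cancel, pow_succ]
  nth_rw 2 [one_sub_pow_eq_mul_sum_inv_pow (sub_ne_zero.mpr hx.symm) n]
  rw [sub_sub_cancel]
  ring

lemma strictMonoOn_sum_inv_one_sub_pow {n : ℕ} (hn : 2 ≤ n) :
    StrictMonoOn (fun x : ℝ => ∑ k ∈ range n, (1 - x)⁻¹ ^ (2 * (n - 1) - k)) (Iio 1) := by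
  intro a ha b hb hab
  have hinv : (1 - a)⁻¹ < (1 - b)⁻¹ :=
    (inv_lt_inv₀ (sub_pos.mpr ha) (sub_pos.mpr hb)).mpr (by linarith)
  have hinv_pos : 0 < (1 - a)⁻¹ := inv_pos.mpr (sub_pos.mpr ha)
  apply sum_lt_sum
  · intro k _
    exact pow_le_pow_left₀ hinv_pos.le hinv.le _
  · exact ⟨0, mem_range.mpr (by omega), pow_lt_pow_left₀ hinv hinv_pos.le (by omega)⟩

lemma strictMonoOn_crossingRatio (m : ℕ) {n : ℕ} (hn : 2 ≤ n) :
    StrictMonoOn (crossingRatio m n) (Ioo 0 1) := by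
  intro a ha b hb hab
  have hA_pos : 0 < 1 - (1 - a) ^ n :=
    sub_pos.mpr (pow_lt_one₀ (by linarith [ha.2]) (by linarith [ha.1]) (by omega))
  have hA_le : 1 - (1 - a) ^ n ≤ 1 - (1 - b) ^ n := by
    gcongr
    linarith [hb.2]
  have hS_lt := strictMonoOn_sum_inv_one_sub_pow hn ha.2 hb.2 hab
  have hS_nonneg : 0 ≤ ∑ k ∈ range n, (1 - b)⁻¹ ^ (2 * (n - 1) - k) :=
    sum_nonneg fun k _ => pow_nonneg (inv_nonneg.mpr (by linarith [hb.2])) _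
  calc crossingRatio m n a
      < (1 - (1 - a) ^ n) ^ (m - 1) * ∑ k ∈ range n, (1 - b)⁻¹ ^ (2 * (n - 1) - k) :=
        mul_lt_mul_of_pos_left hS_lt (pow_pos hA_pos _)
    _ ≤ crossingRatio m n b :=
        mul_le_mul_of_nonneg_right (pow_le_pow_left₀ hA_pos.le hA_le _) hS_nonneg

lemma inv_natCast_le_one_sub_inv_two_mul_pow {n : ℕ} (hn : 1 ≤ n) :
    (n : ℝ)⁻¹ ≤ (1 - (2 * n : ℝ)⁻¹) ^ (2 * (n - 1)) := by
  have hn' : (1 : ℝ) ≤ n := by exact_mod_cast hn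
  have hx : (-2 : ℝ) ≤ -(2 * n : ℝ)⁻¹ := by
    have : (2 * n : ℝ)⁻¹ ≤ 1 := inv_le_one_of_one_le₀ (by linarith)
    linarith
  calc (n : ℝ)⁻¹ = 1 + ((2 * (n - 1) : ℕ) : ℝ) * -(2 * n : ℝ)⁻¹ := by
        rw [Nat.cast_mul, Nat.cast_sub hn]
        field_simp
        ring
    _ ≤ (1 + -(2 * n : ℝ)⁻¹) ^ (2 * (n - 1)) := one_add_mul_le_pow hx _
    _ = (1 - (2 * n : ℝ)⁻¹) ^ (2 * (n - 1)) := by rw [← sub_eq_add_neg]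

lemma exists_mem_Ioc_crossing {m n : ℕ} (hm : 2 ≤ m) (hn : 2 ≤ n) :
    ∃ x ∈ Ioc (0 : ℝ) 1,
      (1 - (1 - x) ^ n) ^ m = (m : ℝ) ^ 2 * (n : ℝ) ^ 2 * x * (1 - x) ^ (2 * (n - 1)) := by
  set g : ℝ → ℝ := fun x =>
    (m : ℝ) ^ 2 * (n : ℝ) ^ 2 * x * (1 - x) ^ (2 * (n - 1)) - (1 - (1 - x) ^ n) ^ m
  set x₀ : ℝ := (2 * n : ℝ)⁻¹
  have hn' : (2 : ℝ) ≤ n := by exact_mod_cast hn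
  have hm' : (2 : ℝ) ≤ m := by exact_mod_cast hm
  have hx₀_pos : 0 < x₀ := by positivity
  have hx₀_lt : x₀ < 1 := inv_lt_one_of_one_lt₀ (by linarith)
  have hg_one : g 1 ≤ 0 := by
    simp [g, zero_pow (by omega : 2 * (n - 1) ≠ 0), zero_pow (by omega : n ≠ 0)]
  have hg_x₀ : 0 ≤ g x₀ := by
    have h_lhs : (1 - (1 - x₀) ^ n) ^ m ≤ 1 :=
      pow_le_one₀ (sub_nonneg.mpr (pow_le_one₀ (by linarith) (by linarith)))
        (sub_le_self _ (pow_nonneg (by linarith) _))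
    have h_rhs : 1 ≤ (m : ℝ) ^ 2 * (n : ℝ) ^ 2 * x₀ * (1 - x₀) ^ (2 * (n - 1)) :=
      calc (1 : ℝ) ≤ (m : ℝ) ^ 2 / 2 := by nlinarith
        _ = (m : ℝ) ^ 2 * (n : ℝ) ^ 2 * x₀ * (n : ℝ)⁻¹ := by
          simp only [x₀]; field_simp
        _ ≤ _ := by gcongr; exact inv_natCast_le_one_sub_inv_two_mul_pow (by omega)
    linarith
  obtain ⟨x, hx, hgx⟩ :=
    intermediate_value_Icc' hx₀_lt.le (by fun_prop : ContinuousOn g (Icc x₀ 1)) ⟨hg_one, hg_x₀⟩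
  exact ⟨x, ⟨hx₀_pos.trans_le hx.1, hx.2⟩, by linarith [show g x = 0 from hgx]⟩

lemma crossingRatio_eq_of_crossing {m n : ℕ} (hm : 1 ≤ m) (hn : 2 ≤ n) {x : ℝ}
    (hx : x ∈ Ioc (0 : ℝ) 1)
    (h : (1 - (1 - x) ^ n) ^ m = (m : ℝ) ^ 2 * (n : ℝ) ^ 2 * x * (1 - x) ^ (2 * (n - 1))) :
    x ∈ Ioo (0 : ℝ) 1 ∧ crossingRatio m n x = (m : ℝ) ^ 2 * (n : ℝ) ^ 2 := by
  have hx_ne : x ≠ 1 := by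
    rintro rfl
    simp [zero_pow (by omega : 2 * (n - 1) ≠ 0), zero_pow (by omega : n ≠ 0)] at h
  have hx' : x ∈ Ioo (0 : ℝ) 1 := ⟨hx.1, hx.2.lt_of_ne hx_ne⟩
  refine ⟨hx', mul_left_cancel₀ (?_ : x * (1 - x) ^ (2 * (n - 1)) ≠ 0) ?_⟩
  · exact mul_ne_zero hx'.1.ne' (pow_ne_zero _ (sub_ne_zero.mpr hx_ne.symm))
  · rw [← pow_eq_mul_crossingRatio hm n hx_ne, h]
    ring

theorem existsUnique_mem_Ioc_crossing {m n : ℕ} (hm : 2 ≤ m) (hn : 2 ≤ n) :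
    ∃! x : ℝ, x ∈ Ioc (0 : ℝ) 1 ∧
      (1 - (1 - x) ^ n) ^ m = (m : ℝ) ^ 2 * (n : ℝ) ^ 2 * x * (1 - x) ^ (2 * (n - 1)) := by
  obtain ⟨x, hx, hx_eq⟩ := exists_mem_Ioc_crossing hm hn
  refine ⟨x, ⟨hx, hx_eq⟩, fun y ⟨hy, hy_eq⟩ => ?_⟩
  obtain ⟨hy', hy_ratio⟩ := crossingRatio_eq_of_crossing (by omega) hn hy hy_eq
  obtain ⟨hx', hx_ratio⟩ := crossingRatio_eq_of_crossing (by omega) hn hx hx_eq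
  exact (strictMonoOn_crossingRatio m hn).injOn hy' hx' (hy_ratio.trans hx_ratio.symm)

/-- For integers `r ≥ l ≥ 3`, the equation
`(1-(1-x)^(r-1))^(l-1) = (l-1)²(r-1)² x (1-x)^(2(r-2))`
has exactly one solution in `(0,1]`. -/
theorem unique_crossing_point (l r : ℕ) (hl : 3 ≤ l) (hlr : l ≤ r) :
    ∃! x : ℝ, x ∈ Set.Ioc (0:ℝ) 1 ∧
      (1 - (1 - x)^(r-1))^(l-1)
        = ((l:ℝ) - 1)^2 * ((r:ℝ) - 1)^2 * x * (1 - x)^(2*(r-2)) := by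
  have hl_cast : ((l - 1 : ℕ) : ℝ) = (l : ℝ) - 1 := by rw [Nat.cast_sub (by omega), Nat.cast_one]
  have hr_cast : ((r - 1 : ℕ) : ℝ) = (r : ℝ) - 1 := by rw [Nat.cast_sub (by omega), Nat.cast_one]
  have hexp : 2 * (r - 1 - 1) = 2 * (r - 2) := by omega
  have := existsUnique_mem_Ioc_crossing (m := l - 1) (n := r - 1) (by omega) (by omega)
  rwa [hl_cast, hr_cast, hexp] at this
end

section
/- For integers 3 <= l <= r, let x_u(1) be the smallest strictly positive solution of x = (1-(1-x)^(r-1))^(l-1). Then x_u(1) >= (r-1)^(-(l-1)/(l-2)). Moreover, for x-bar = 1 - ((l-1)*(r-1))^(-1/(r-2)) with r >= 4, one has (1 - (1-x-bar)^(r-1))^(l-1) >= x-bar, so x-bar >= x_u(1). -/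
/-!
Write `f(x) = (1 - (1 - x)^(r-1))^(l-1)`. Bernoulli's inequality gives `f(x) ≤ ((r-1) x)^(l-1)`,
so a positive `x ≤ 1` with `x ≤ f(x)` satisfies `1 ≤ (r-1)^(l-1) x^(l-2)`, i.e.
`x ≥ (r-1)^(-(l-1)/(l-2))`; this applies to `x_u(1)`, which is at most the fixed point `1`.
Conversely, small `x > 0` have `f(x) < x`. For `s = ((l-1)(r-1))^(-1/(r-2))` one has
`s^(r-1) = s / ((l-1)(r-1))`, and Bernoulli again gives `f(1 - s) ≥ 1 - s/(r-1) ≥ 1 - s`, so the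
intermediate value theorem yields a positive fixed point in `(0, 1 - s]`.
-/

open Real Set Function

/-- The density-evolution map of the `(l, r)`-regular ensemble on BEC(1), with `m = l - 1` and
`n = r - 1`. -/
def densityEvolution (m n : ℕ) (x : ℝ) : ℝ := (1 - (1 - x) ^ n) ^ m

lemma one_sub_mul_le_pow {x : ℝ} (hx : x ≤ 2) (n : ℕ) : 1 - n * x ≤ (1 - x) ^ n := by
  simpa only [← sub_eq_add_neg, mul_neg] using one_add_mul_le_pow (a := -x) (by linarith) n

lemma rpow_neg_inv_sub_one_pow_mul {A : ℝ} (hA : 0 < A) {n : ℕ} (hn : n ≠ 1) :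
    (A ^ (-(1 / ((n : ℝ) - 1)))) ^ n * A = A ^ (-(1 / ((n : ℝ) - 1))) := by
  have hn' : (n : ℝ) - 1 ≠ 0 := sub_ne_zero.mpr (by exact_mod_cast hn)
  rw [← rpow_natCast, ← rpow_mul hA.le, ← rpow_add_one hA.ne']
  congr 1
  field_simp
  ring

lemma rpow_neg_div_le_iff_one_le_pow_mul_pow {a x : ℝ} (ha : 0 < a) (hx : 0 ≤ x) {k : ℕ}
    (hk : k ≠ 0) : a ^ (-(((k + 1 : ℕ) : ℝ) / k)) ≤ x ↔ 1 ≤ a ^ (k + 1) * x ^ k := by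
  set b := a ^ (-(((k + 1 : ℕ) : ℝ) / k))
  have hb : a ^ (k + 1) * b ^ k = 1 := by
    have hk' : (k : ℝ) ≠ 0 := by exact_mod_cast hk
    rw [← rpow_natCast b, ← rpow_mul ha.le, ← rpow_natCast, ← rpow_add ha]
    convert rpow_zero a using 2
    push_cast
    field_simp
    ring
  rw [← pow_le_pow_iff_left₀ (rpow_nonneg ha.le _) hx hk,
    ← mul_le_mul_iff_right₀ (pow_pos ha (k + 1)), hb]

section DensityEvolution

variable {m n : ℕ}

lemma continuous_densityEvolution : Continuous (densityEvolution m n) := by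
  unfold densityEvolution
  fun_prop

lemma densityEvolution_one (hn : n ≠ 0) : densityEvolution m n 1 = 1 := by
  simp [densityEvolution, hn]

lemma densityEvolution_le_mul_pow {x : ℝ} (hx0 : 0 ≤ x) (hx1 : x ≤ 1) :
    densityEvolution m n x ≤ (n * x) ^ m := by
  have h : 0 ≤ 1 - (1 - x) ^ n := sub_nonneg.mpr (pow_le_one₀ (by linarith) (by linarith))
  exact pow_le_pow_left₀ h (by linarith [one_sub_mul_le_pow (by linarith : x ≤ 2) n]) m

lemma one_le_pow_mul_pow_of_le_densityEvolution {k : ℕ} {x : ℝ} (hx0 : 0 < x) (hx1 : x ≤ 1)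
    (h : x ≤ densityEvolution (k + 1) n x) : 1 ≤ (n : ℝ) ^ (k + 1) * x ^ k := by
  refine le_of_mul_le_mul_right ?_ hx0
  calc 1 * x = x := one_mul x
    _ ≤ densityEvolution (k + 1) n x := h
    _ ≤ (n * x) ^ (k + 1) := densityEvolution_le_mul_pow hx0.le hx1
    _ = ((n : ℝ) ^ (k + 1) * x ^ k) * x := by ring

lemma rpow_le_of_le_densityEvolution {k : ℕ} (hk : k ≠ 0) (hn : n ≠ 0) {x : ℝ} (hx0 : 0 < x)
    (hx1 : x ≤ 1) (h : x ≤ densityEvolution (k + 1) n x) :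
    (n : ℝ) ^ (-(((k + 1 : ℕ) : ℝ) / k)) ≤ x :=
  (rpow_neg_div_le_iff_one_le_pow_mul_pow (by positivity) hx0.le hk).mpr
    (one_le_pow_mul_pow_of_le_densityEvolution hx0 hx1 h)

lemma one_sub_le_densityEvolution_one_sub {s : ℝ} (hs0 : 0 ≤ s) (hs1 : s ≤ 1) (hn : n ≠ 0)
    (h : s ^ n * (m * n) = s) : 1 - s ≤ densityEvolution m n (1 - s) := by
  have hn1 : (1 : ℝ) ≤ n := by exact_mod_cast Nat.one_le_iff_ne_zero.mpr hn
  have hsn : s ^ n ≤ 2 := by linarith [pow_le_one₀ hs0 hs1 (n := n)]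
  have hms : m * s ^ n ≤ s := by
    calc (m : ℝ) * s ^ n ≤ m * s ^ n * n := le_mul_of_one_le_right (by positivity) hn1
      _ = s ^ n * (m * n) := by ring
      _ = s := h
  rw [densityEvolution, sub_sub_cancel]
  linarith [one_sub_mul_le_pow hsn m]

lemma exists_pos_isFixedPt_le_of_le_densityEvolution {k : ℕ} (hk : k ≠ 0) (hn : n ≠ 0) {c : ℝ}
    (hc0 : 0 < c) (hc1 : c ≤ 1) (hc : c ≤ densityEvolution (k + 1) n c) :
    ∃ y, 0 < y ∧ y ≤ c ∧ IsFixedPt (densityEvolution (k + 1) n) y := by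
  set b := (n : ℝ) ^ (-(((k + 1 : ℕ) : ℝ) / k))
  have hb : 0 < b := rpow_pos_of_pos (by positivity) _
  set ε := min c (b / 2)
  have hε0 : 0 < ε := lt_min hc0 (half_pos hb)
  have hεc : ε ≤ c := min_le_left _ _
  -- below the threshold `b` the map lies strictly under the diagonal
  have hε : densityEvolution (k + 1) n ε ≤ ε := by
    by_contra! hlt
    have := rpow_le_of_le_densityEvolution hk hn hε0 (hεc.trans hc1) hlt.le
    linarith [min_le_right c (b / 2)]
  obtain ⟨y, hy, hfix⟩ :=
    exists_mem_uIcc_isFixedPt continuous_densityEvolution.continuousOn hc hε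
  rw [uIcc_of_ge hεc] at hy
  exact ⟨y, hε0.trans_le hy.1, hy.2, hfix⟩

/-- The paper's `x̄ = 1 - ((l-1)(r-1))^(-1/(r-2))`, with `m = l - 1` and `n = r - 1`. -/
noncomputable def xBar (m n : ℕ) : ℝ := 1 - ((m : ℝ) * n) ^ (-(1 / ((n : ℝ) - 1)))

lemma xBar_le_one : xBar m n ≤ 1 :=
  sub_le_self _ (rpow_nonneg (by positivity) _)

lemma xBar_pos (hm : m ≠ 0) (hn : 2 ≤ n) : 0 < xBar m n := by
  have hm1 : (1 : ℝ) ≤ m := by exact_mod_cast Nat.one_le_iff_ne_zero.mpr hm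
  have hn2 : (2 : ℝ) ≤ n := by exact_mod_cast hn
  have hexp : -(1 / ((n : ℝ) - 1)) < 0 := neg_neg_of_pos (one_div_pos.mpr (by linarith))
  exact sub_pos.mpr (rpow_lt_one_of_one_lt_of_neg (by nlinarith) hexp)

lemma xBar_le_densityEvolution (hm : m ≠ 0) (hn : 2 ≤ n) :
    xBar m n ≤ densityEvolution m n (xBar m n) :=
  one_sub_le_densityEvolution_one_sub (rpow_nonneg (by positivity) _)
    (sub_pos.mp (xBar_pos hm hn)).le (by omega)
    (rpow_neg_inv_sub_one_pow_mul (by positivity) (by omega))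

end DensityEvolution

/-- Let `x_u(1)` be the smallest strictly positive solution of
`x = (1-(1-x)^(r-1))^(l-1)` (the unstable DE fixed point over BEC(1)). Then
`x_u(1) ≥ (r-1)^(-(l-1)/(l-2))`, and moreover, for `r ≥ 4` and
`x̄ = 1 - ((l-1)(r-1))^(-1/(r-2))`, one has
`(1-(1-x̄)^(r-1))^(l-1) ≥ x̄`, hence `x̄ ≥ x_u(1)`. -/
theorem xu_lower_bound (l r : ℕ) (hl : 3 ≤ l) (hlr : l ≤ r) (xu : ℝ)
    (hxu_pos : 0 < xu)
    (hxu_fix : xu = (1 - (1 - xu)^(r-1))^(l-1))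
    (hxu_min : ∀ y : ℝ, 0 < y → y = (1 - (1 - y)^(r-1))^(l-1) → xu ≤ y) :
    ((r:ℝ) - 1) ^ (-(((l:ℝ) - 1)/((l:ℝ) - 2))) ≤ xu ∧
    (4 ≤ r →
      (1 - ((((l:ℝ) - 1) * ((r:ℝ) - 1)) ^ (-(1/((r:ℝ) - 2))))^(r-1))^(l-1)
          ≥ 1 - (((l:ℝ) - 1) * ((r:ℝ) - 1)) ^ (-(1/((r:ℝ) - 2))) ∧
      xu ≤ 1 - (((l:ℝ) - 1) * ((r:ℝ) - 1)) ^ (-(1/((r:ℝ) - 2)))) := by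
  obtain ⟨k, rfl⟩ : ∃ k, l = k + 2 := ⟨l - 2, by omega⟩
  obtain ⟨n, rfl⟩ : ∃ n, r = n + 1 := ⟨r - 1, by omega⟩
  have hk : k ≠ 0 := by omega
  have hn : 2 ≤ n := by omega
  have hl1 : ((k + 2 : ℕ) : ℝ) - 1 = (k + 1 : ℕ) := by push_cast; ring
  have hl2 : ((k + 2 : ℕ) : ℝ) - 2 = k := by push_cast; ring
  have hr1 : ((n + 1 : ℕ) : ℝ) - 1 = n := by push_cast; ring
  have hr2 : ((n + 1 : ℕ) : ℝ) - 2 = n - 1 := by push_cast; ring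
  rw [hl1, hl2, hr1, hr2]
  change xu = densityEvolution (k + 1) n xu at hxu_fix
  change ∀ y : ℝ, 0 < y → y = densityEvolution (k + 1) n y → xu ≤ y at hxu_min
  have hxu_one : xu ≤ 1 := hxu_min 1 one_pos (densityEvolution_one (by omega)).symm
  have hxBar := xBar_le_densityEvolution k.succ_ne_zero hn
  obtain ⟨y, hy0, hy, hyfix⟩ := exists_pos_isFixedPt_le_of_le_densityEvolution hk (by omega)
    (xBar_pos k.succ_ne_zero hn) xBar_le_one hxBar
  refine ⟨rpow_le_of_le_densityEvolution hk (by omega) hxu_pos hxu_one hxu_fix.le,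
    fun _ => ⟨?_, (hxu_min y hy0 hyfix.symm).trans hy⟩⟩
  rwa [densityEvolution, xBar, sub_sub_cancel] at hxBar
end
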